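/- arXiv:1606.02918 — 6 statements merged into one kernel-verified Lean document; each statement's English description precedes it below -/
import Mathlib

section
/- Let $G$ be a topological semigroup with identity acting continuously on a compact metric space $(X,d)$, and let $y \in X$ be a Bohr almost periodic point (i.e., for every $\varepsilon > 0$ the set $\{\tau \in G : d(g(y), (\tau \circ g)(y)) < \varepsilon \text{ for all } g \in G\}$ is left syndetic in $G$). Then the family of maps $\{g : \mathrm{cls}_X G(y) \to \mathrm{cls}_X G(y)\}_{g \in G}$ is equicontinuous: for every $\varepsilon > 0$ there exists $\delta > 0$ such that for all $x, z \in \mathrm{cls}_X G(y)$ with $d(x,z) < \delta$, one has $d(g(x), g(z)) < \varepsilon$ for every $g \in G$. -/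
open MulAction Set Pointwise
open scoped Uniformity

/-- A point `y` is Bohr almost periodic for the action of `G` on `X`:
for every `ε > 0` the ε-error period set is left syndetic in `G`. -/
def IsBohrAlmostPeriodicPt {G X : Type*} [Monoid G] [TopologicalSpace G]
    [MetricSpace X] [MulAction G X] (y : X) : Prop :=
  ∀ ε > (0 : ℝ), ∃ L : Set G, IsCompact L ∧
    {τ : G | ∀ g : G, dist (g • y) ((τ * g) • y) < ε} * L = Set.univ

theorem equicontinuity_of_bohr_almost_periodic
    {G X : Type*} [Monoid G] [TopologicalSpace G] [ContinuousMul G]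
    [MetricSpace X] [CompactSpace X] [MulAction G X] [ContinuousSMul G X]
    (y : X) (hy : IsBohrAlmostPeriodicPt (G := G) y) :
    ∀ ε > (0 : ℝ), ∃ δ > (0 : ℝ),
      ∀ x ∈ closure (MulAction.orbit G y), ∀ z ∈ closure (MulAction.orbit G y),
        dist x z < δ → ∀ g : G, dist (g • x) (g • z) < ε := by
  intro ε hε
  set ε' : ℝ := ε / 4 with hε'def
  have hε' : 0 < ε' := by positivity
  obtain ⟨L, hL, hTL⟩ := hy ε' hε'
  set T : Set G := {τ : G | ∀ g : G, dist (g • y) ((τ * g) • y) < ε'} with hT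
  -- Claim A : every τ ∈ T moves every point of the orbit closure by at most ε'
  have claimA : ∀ τ ∈ T, ∀ x ∈ closure (MulAction.orbit G y), dist x (τ • x) ≤ ε' := by
    intro τ hτ x hx
    have hclosed : IsClosed {x : X | dist x (τ • x) ≤ ε'} :=
      isClosed_le (Continuous.dist continuous_id (continuous_const_smul τ)) continuous_const
    have horb : MulAction.orbit G y ⊆ {x : X | dist x (τ • x) ≤ ε'} := by
      rintro _ ⟨g, rfl⟩
      have := (hτ g).le
      simpa [mul_smul] using this
    exact closure_minimal horb hclosed hx
  -- Claim C : the orbit closure is invariant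
  have claimC : ∀ (l : G), ∀ x ∈ closure (MulAction.orbit G y),
      l • x ∈ closure (MulAction.orbit G y) := by
    intro l x hx
    have : (l • ·) '' MulAction.orbit G y ⊆ MulAction.orbit G y := by
      rintro _ ⟨_, ⟨g, rfl⟩, rfl⟩
      exact ⟨l * g, by simp [mul_smul]⟩
    have hmaps : MapsTo (l • ·) (closure (MulAction.orbit G y))
        (closure (MulAction.orbit G y)) := by
      have := (MapsTo.closure (fun a ha => this ⟨a, ha, rfl⟩)
        (continuous_const_smul l))
      exact this
    exact hmaps hx
  -- Claim B : uniform equicontinuity over the compact set L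
  set Φ : G → C(X, X) := fun g => ⟨(g • ·), continuous_const_smul g⟩ with hΦdef
  have hΦ : Continuous Φ := by
    apply ContinuousMap.continuous_of_continuous_uncurry
    exact continuous_smul
  have hKc : IsCompact (Φ '' L) := hL.image hΦ
  have htb := hKc.totallyBounded
  obtain ⟨t, htfin, htcov⟩ := (Metric.totallyBounded_iff.mp htb) (ε' / 3) (by positivity)
  -- the finitely many centers are uniformly continuous; combine the moduli
  have hS : (⋂ f ∈ t, {p : X × X | dist (f p.1) (f p.2) < ε' / 3}) ∈ 𝓤 X := by
    refine (Filter.biInter_mem htfin).2 fun f hf => ?_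
    have huc : UniformContinuous f :=
      CompactSpace.uniformContinuous_of_continuous f.continuous
    have hmem : {p : X × X | dist p.1 p.2 < ε' / 3} ∈ 𝓤 X :=
      Metric.dist_mem_uniformity (by positivity)
    exact huc hmem
  obtain ⟨δ, hδ, hδS⟩ := Metric.mem_uniformity_dist.mp hS
  have claimB : ∀ l ∈ L, ∀ x z : X, dist x z < δ → dist (l • x) (l • z) < ε' := by
    intro l hl x z hxz
    have hΦl : Φ l ∈ ⋃ f ∈ t, Metric.ball f (ε' / 3) := htcov ⟨l, hl, rfl⟩
    obtain ⟨f, hf, hball⟩ := by simpa using hΦl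
    have hmem := hδS hxz
    have hfd : dist (f x) (f z) < ε' / 3 := by
      have := Set.mem_iInter₂.mp hmem f hf
      exact this
    have h1 : dist (l • x) (f x) ≤ dist (Φ l) f :=
      ContinuousMap.dist_apply_le_dist (f := Φ l) (g := f) x
    have h2 : dist (f z) (l • z) ≤ dist (Φ l) f := by
      show dist (f z) ((Φ l) z) ≤ dist (Φ l) f
      rw [dist_comm (Φ l) f]
      exact ContinuousMap.dist_apply_le_dist z
    calc dist (l • x) (l • z) ≤ dist (l • x) (f x) + dist (f x) (f z) + dist (f z) (l • z) :=
          dist_triangle4 _ _ _ _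
      _ < ε' / 3 + ε' / 3 + ε' / 3 := by
          have hb : dist (Φ l) f < ε' / 3 := hball
          linarith [h1.trans_lt hb, h2.trans_lt hb, hfd]
      _ = ε' := by ring
  refine ⟨δ, hδ, ?_⟩
  intro x hx z hz hxz g
  have hg : g ∈ T * L := by rw [hTL]; trivial
  obtain ⟨τ, hτ, l, hl, hτl⟩ := hg
  have hgx : g • x = τ • (l • x) := by rw [← hτl, mul_smul]
  have hgz : g • z = τ • (l • z) := by rw [← hτl, mul_smul]
  have hlx : l • x ∈ closure (MulAction.orbit G y) := claimC l x hx
  have hlz : l • z ∈ closure (MulAction.orbit G y) := claimC l z hz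
  have h1 : dist (l • x) (τ • (l • x)) ≤ ε' := claimA τ hτ _ hlx
  have h2 : dist (l • z) (τ • (l • z)) ≤ ε' := claimA τ hτ _ hlz
  have h3 : dist (l • x) (l • z) < ε' := claimB l hl x z hxz
  rw [hgx, hgz]
  calc dist (τ • (l • x)) (τ • (l • z))
      ≤ dist (τ • (l • x)) (l • x) + dist (l • x) (l • z) + dist (l • z) (τ • (l • z)) :=
        dist_triangle4 _ _ _ _
    _ < ε' + ε' + ε' := by
        have := h1; have := h2
        rw [dist_comm (τ • (l • x)) (l • x)]
        linarith
    _ < ε := by rw [hε'def]; linarith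
end

section
/- Let $G$ be a topological abelian semigroup with identity acting continuously on a compact metric space $(X,d)$, let $y \in X$ be a Bohr almost periodic point, and let $(t_n), (s_n)$ be sequences in $G$. If $(t_n(y))_{n=1}^\infty$ and $(s_n(y))_{n=1}^\infty$ are Cauchy sequences in $X$, then $((t_n \circ s_n)(y))_{n=1}^\infty$ is also a Cauchy sequence in $X$. -/
open MulAction Set Pointwise

lemma uniform_smul_of_isCompact {G X : Type*} [Monoid G] [TopologicalSpace G]
    [MetricSpace X] [CompactSpace X] [MulAction G X] [ContinuousSMul G X]
    {L : Set G} (hL : IsCompact L) {ε : ℝ} (hε : 0 < ε) :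
    ∃ δ > 0, ∀ l ∈ L, ∀ x x' : X, dist x x' < δ → dist (l • x) (l • x') < ε := by
  rcases Set.eq_empty_or_nonempty L with hLe | hLne
  · exact ⟨1, one_pos, by simp [hLe]⟩
  rcases isEmpty_or_nonempty X with hX | hX
  · exact ⟨1, one_pos, fun l _ x => (IsEmpty.false x).elim⟩
  have hc : Continuous (fun p : G × X => p.1 • p.2) := continuous_smul
  have H : ∀ z : G × X, ∃ u : Set G, ∃ r : ℝ, IsOpen u ∧ z.1 ∈ u ∧ 0 < r ∧
      ∀ l' ∈ u, ∀ x' ∈ Metric.ball z.2 r, dist (l' • x') (z.1 • z.2) < ε / 2 := by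
    intro z
    have hS : IsOpen ((fun p : G × X => p.1 • p.2) ⁻¹' Metric.ball (z.1 • z.2) (ε / 2)) :=
      Metric.isOpen_ball.preimage hc
    have hzS : z ∈ (fun p : G × X => p.1 • p.2) ⁻¹' Metric.ball (z.1 • z.2) (ε / 2) := by
      simp [Metric.mem_ball, half_pos hε]
    have hmem : ((fun p : G × X => p.1 • p.2) ⁻¹' Metric.ball (z.1 • z.2) (ε / 2))
        ∈ nhds (z.1, z.2) := by
      rw [Prod.mk.eta]; exact hS.mem_nhds hzS
    obtain ⟨u, v, hu, hzu, hv, hzv, huv⟩ := mem_nhds_prod_iff'.mp hmem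
    obtain ⟨r, hr, hrv⟩ := Metric.isOpen_iff.mp hv z.2 hzv
    refine ⟨u, r, hu, hzu, hr, fun l' hl' x' hx' => ?_⟩
    have := huv (Set.mk_mem_prod hl' (hrv hx'))
    simpa [Metric.mem_ball] using this
  choose u r hu hzu hr hprop using H
  have hK : IsCompact (L ×ˢ (univ : Set X)) := hL.prod isCompact_univ
  obtain ⟨t, htK, htcov⟩ := hK.elim_nhds_subcover
    (fun z => u z ×ˢ Metric.ball z.2 (r z / 2))
    (fun z hz => ((hu z).prod Metric.isOpen_ball).mem_nhds
      (Set.mk_mem_prod (hzu z) (by simp [half_pos (hr z)])))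
  have hKne : (L ×ˢ (univ : Set X)).Nonempty := hLne.prod ⟨Classical.arbitrary X, mem_univ _⟩
  obtain ⟨z₀, hz₀⟩ := hKne
  obtain ⟨i, hit, _⟩ := Set.mem_iUnion₂.mp (htcov hz₀)
  have htne : t.Nonempty := ⟨i, hit⟩
  refine ⟨t.inf' htne (fun z => r z / 2), ?_, ?_⟩
  · exact (Finset.lt_inf'_iff htne).mpr fun z _ => half_pos (hr z)
  · intro l hl x x' hxx
    have hmemK : (l, x) ∈ L ×ˢ (univ : Set X) := Set.mk_mem_prod hl (mem_univ x)
    obtain ⟨z, hzt, hz⟩ := Set.mem_iUnion₂.mp (htcov hmemK)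
    have hlu : l ∈ u z := hz.1
    have hx2 : dist x z.2 < r z / 2 := by simpa [Metric.mem_ball] using hz.2
    have hδle : t.inf' htne (fun z => r z / 2) ≤ r z / 2 := Finset.inf'_le _ hzt
    have hxb : x ∈ Metric.ball z.2 (r z) := by
      rw [Metric.mem_ball]; linarith [hr z]
    have hx'b : x' ∈ Metric.ball z.2 (r z) := by
      rw [Metric.mem_ball]
      have h1 := dist_triangle x' x z.2
      have h2 : dist x' x < t.inf' htne (fun z => r z / 2) := by
        rw [dist_comm]; exact hxx
      linarith
    have e1 := hprop z l hlu x hxb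
    have e2 := hprop z l hlu x' hx'b
    have h3 := dist_triangle (l • x) (z.1 • z.2) (l • x')
    have h4 : dist (z.1 • z.2) (l • x') = dist (l • x') (z.1 • z.2) := dist_comm _ _
    linarith

theorem cauchy_of_bohr_almost_periodic
    {G X : Type*} [CommMonoid G] [TopologicalSpace G] [ContinuousMul G]
    [MetricSpace X] [CompactSpace X] [MulAction G X] [ContinuousSMul G X]
    (y : X) (hy : IsBohrAlmostPeriodicPt (G := G) y)
    (t s : ℕ → G)
    (ht : CauchySeq (fun n => t n • y)) (hs : CauchySeq (fun n => s n • y)) :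
    CauchySeq (fun n => (t n * s n) • y) := by
  rw [Metric.cauchySeq_iff]
  intro ε hε
  have hε7 : (0 : ℝ) < ε / 7 := by linarith
  obtain ⟨L, hLc, hLP⟩ := hy (ε / 7) hε7
  obtain ⟨δ, hδ, hδL⟩ := uniform_smul_of_isCompact (G := G) (X := X) hLc hε7
  obtain ⟨N₁, hN₁⟩ := Metric.cauchySeq_iff.mp ht δ hδ
  obtain ⟨N₂, hN₂⟩ := Metric.cauchySeq_iff.mp hs δ hδ
  have key : ∀ a g h : G, dist (g • y) (h • y) < δ →
      dist ((a * g) • y) ((a * h) • y) < 3 * (ε / 7) := by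
    intro a g h hgh
    have ha : a ∈ {τ : G | ∀ g : G, dist (g • y) ((τ * g) • y) < ε / 7} * L := by
      rw [hLP]; exact Set.mem_univ a
    obtain ⟨p, hp, l, hl, hpl⟩ := Set.mem_mul.mp ha
    have e1 : dist ((a * g) • y) ((l * g) • y) < ε / 7 := by
      have h1 := hp (l * g)
      have hrw : a * g = p * (l * g) := by rw [← hpl, mul_assoc]
      rw [hrw, dist_comm]
      exact h1
    have e2 : dist ((l * g) • y) ((l * h) • y) < ε / 7 := by
      rw [mul_smul, mul_smul]
      exact hδL l hl _ _ hgh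
    have e3 : dist ((l * h) • y) ((a * h) • y) < ε / 7 := by
      have h1 := hp (l * h)
      have hrw : a * h = p * (l * h) := by rw [← hpl, mul_assoc]
      rw [hrw]
      exact h1
    calc dist ((a * g) • y) ((a * h) • y)
        ≤ dist ((a * g) • y) ((l * g) • y) + dist ((l * g) • y) ((l * h) • y)
          + dist ((l * h) • y) ((a * h) • y) := dist_triangle4 _ _ _ _
      _ < 3 * (ε / 7) := by linarith
  refine ⟨max N₁ N₂, fun m hm n hn => ?_⟩
  have h1 : dist ((t m * s m) • y) ((t n * s m) • y) < 3 * (ε / 7) := by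
    have := key (s m) (t m) (t n) (hN₁ m (le_of_max_le_left hm) n (le_of_max_le_left hn))
    simpa [mul_comm] using this
  have h2 : dist ((t n * s m) • y) ((t n * s n) • y) < 3 * (ε / 7) :=
    key (t n) (s m) (s n) (hN₂ m (le_of_max_le_right hm) n (le_of_max_le_right hn))
  calc dist ((t m * s m) • y) ((t n * s n) • y)
      ≤ dist ((t m * s m) • y) ((t n * s m) • y) + dist ((t n * s m) • y) ((t n * s n) • y) :=
        dist_triangle _ _ _
    _ < ε := by linarith
end

section
/- Let $G$ be a topological abelian semigroup with identity $e$ acting continuously on a compact metric space $X$, and let $y \in X$ be a Bohr almost periodic point. Then $K = \mathrm{cls}_X G(y)$ carries a continuous commutative binary operation $\diamond$ making $K$ a compact abelian topological semigroup such that $g(y) \diamond h(y) = (g \circ h)(y)$ for all $g,h \in G$, the point $y = e(y)$ is an identity for $\diamond$, and the action of $G$ on $K$ is given by translation: $g(x) = g(y) \diamond x$ for all $g \in G$ and $x \in K$. -/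
open MulAction Set Pointwise

open Filter Topology

set_option linter.unusedSectionVars false

section BohrAux

variable {G X : Type*} [CommMonoid G] [TopologicalSpace G] [ContinuousMul G]
    [MetricSpace X] [CompactSpace X] [MulAction G X] [ContinuousSMul G X]

/-- Uniform continuity of the action over a compact set of group elements. -/
lemma bohr_uc_aux (L : Set G) (hL : IsCompact L) {ε : ℝ} (hε : 0 < ε) :
    ∃ δ > 0, ∀ l ∈ L, ∀ u v : X, dist u v < δ → dist (l • u) (l • v) < ε := by
  set C : Set (G × X × X) := {p | p.1 ∈ L ∧ ε ≤ dist (p.1 • p.2.1) (p.1 • p.2.2)} with hCdef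
  have hcont : Continuous fun p : G × X × X => dist (p.1 • p.2.1) (p.1 • p.2.2) :=
    (continuous_fst.smul (continuous_fst.comp continuous_snd)).dist
      (continuous_fst.smul (continuous_snd.comp continuous_snd))
  have hC : IsCompact C := by
    have hD : IsClosed {p : G × X × X | ε ≤ dist (p.1 • p.2.1) (p.1 • p.2.2)} :=
      isClosed_le continuous_const hcont
    have : C = (L ×ˢ (univ ×ˢ univ)) ∩ {p | ε ≤ dist (p.1 • p.2.1) (p.1 • p.2.2)} := by
      ext p; simp [hCdef, Set.mem_prod]
    rw [this]
    exact ((hL.prod (isCompact_univ.prod isCompact_univ)).inter_right hD)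
  rcases C.eq_empty_or_nonempty with hemp | hne
  · refine ⟨1, one_pos, fun l hl u v _ => ?_⟩
    by_contra h
    have : (l, u, v) ∈ C := ⟨hl, le_of_not_gt h⟩
    simp [hemp] at this
  · obtain ⟨p₀, hp₀C, hmin⟩ := hC.exists_isMinOn hne
      ((continuous_fst.comp continuous_snd).dist (continuous_snd.comp continuous_snd)).continuousOn
    have hpos : 0 < dist p₀.2.1 p₀.2.2 := by
      rcases hp₀C with ⟨-, h2⟩
      have : p₀.1 • p₀.2.1 ≠ p₀.1 • p₀.2.2 := by
        intro h; rw [h, dist_self] at h2; linarith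
      have : p₀.2.1 ≠ p₀.2.2 := fun h => this (by rw [h])
      exact dist_pos.2 this
    refine ⟨dist p₀.2.1 p₀.2.2, hpos, fun l hl u v hd => ?_⟩
    by_contra h
    have hmem : (l, u, v) ∈ C := ⟨hl, le_of_not_gt h⟩
    have := hmin hmem
    simp only [Function.comp] at this
    exact absurd hd (not_lt.2 this)

/-- Key uniform estimate from Bohr almost periodicity. -/
lemma bohr_star_aux (y : X) (hy : IsBohrAlmostPeriodicPt (G := G) y) {ε : ℝ} (hε : 0 < ε) :
    ∃ δ > 0, ∀ g h : G, dist (g • y) (h • y) < δ →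
      ∀ x ∈ closure (MulAction.orbit G y), dist (g • x) (h • x) ≤ ε := by
  obtain ⟨L, hL, hPL⟩ := hy (ε / 4) (by linarith)
  obtain ⟨δ, hδpos, hUC⟩ := bohr_uc_aux (X := X) L hL (show (0:ℝ) < ε/4 by linarith)
  refine ⟨δ, hδpos, fun g h hgh x hx => ?_⟩
  have horb : ∀ k : G, dist (g • (k • y)) (h • (k • y)) ≤ ε := by
    intro k
    have hk : k ∈ {τ : G | ∀ g : G, dist (g • y) ((τ * g) • y) < ε/4} * L := by
      rw [hPL]; exact mem_univ k
    obtain ⟨τ, hτ, l, hl, hk⟩ := hk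
    have h1 : dist ((k * g) • y) ((l * g) • y) < ε/4 := by
      have := hτ (l * g)
      rw [dist_comm] at this
      calc dist ((k * g) • y) ((l * g) • y)
          = dist ((τ * (l * g)) • y) ((l * g) • y) := by rw [← hk, mul_assoc]
        _ < ε/4 := this
    have h2 : dist ((k * h) • y) ((l * h) • y) < ε/4 := by
      have := hτ (l * h)
      rw [dist_comm] at this
      calc dist ((k * h) • y) ((l * h) • y)
          = dist ((τ * (l * h)) • y) ((l * h) • y) := by rw [← hk, mul_assoc]
        _ < ε/4 := this
    have h3 : dist ((l * g) • y) ((l * h) • y) < ε/4 := by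
      rw [mul_smul, mul_smul]
      exact hUC l hl _ _ hgh
    have key : dist ((k * g) • y) ((k * h) • y) ≤ ε := by
      calc dist ((k * g) • y) ((k * h) • y)
          ≤ dist ((k * g) • y) ((l * g) • y) + dist ((l * g) • y) ((l * h) • y)
              + dist ((l * h) • y) ((k * h) • y) := dist_triangle4 _ _ _ _
        _ ≤ ε/4 + ε/4 + ε/4 := by
            rw [dist_comm ((l * h) • y)]
            exact add_le_add (add_le_add h1.le h3.le) h2.le
        _ ≤ ε := by linarith
    calc dist (g • (k • y)) (h • (k • y))
        = dist ((k * g) • y) ((k * h) • y) := by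
          rw [← mul_smul, ← mul_smul, mul_comm k g, mul_comm k h]
      _ ≤ ε := key
  have hclosed : IsClosed {x : X | dist (g • x) (h • x) ≤ ε} :=
    isClosed_le (((continuous_const_smul g).dist (continuous_const_smul h))) continuous_const
  have hsub : MulAction.orbit G y ⊆ {x : X | dist (g • x) (h • x) ≤ ε} := by
    rintro x ⟨k, rfl⟩
    exact horb k
  exact closure_minimal hsub hclosed hx

end BohrAux

section BohrCore

variable {G X : Type*} [CommMonoid G] [TopologicalSpace G] [ContinuousMul G]
    [MetricSpace X] [CompactSpace X] [MulAction G X] [ContinuousSMul G X]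

lemma bohr_neBot (y x : X) (hx : x ∈ closure (MulAction.orbit G y)) :
    (comap (fun g : G => g • y) (𝓝 x)).NeBot := by
  rw [comap_neBot_iff]
  intro t ht
  obtain ⟨z, hzt, g, rfl⟩ := mem_closure_iff_nhds.1 hx t ht
  exact ⟨g, hzt⟩

noncomputable def bohrOp (y : X) : X → X → X :=
  fun x z => @limUnder _ _ _ ⟨y⟩ (comap (fun g : G => g • y) (𝓝 x)) fun g => g • z

lemma bohr_tendsto_op (y : X) (hy : IsBohrAlmostPeriodicPt (G := G) y) {x z : X}
    (hx : x ∈ closure (MulAction.orbit G y)) (hz : z ∈ closure (MulAction.orbit G y)) :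
    Tendsto (fun g : G => g • z) (comap (fun g : G => g • y) (𝓝 x)) (𝓝 (bohrOp (G := G) y x z)) := by
  haveI := bohr_neBot y x hx
  have hcauchy : Cauchy (map (fun g : G => g • z) (comap (fun g : G => g • y) (𝓝 x))) := by
    rw [Metric.cauchy_iff]
    refine ⟨map_neBot, fun ε hε => ?_⟩
    obtain ⟨δ, hδpos, hδ⟩ := bohr_star_aux y hy (show (0:ℝ) < ε/2 by linarith)
    refine ⟨(fun g : G => g • z) '' {g | dist (g • y) x < δ/2}, ?_, ?_⟩
    · exact image_mem_map (preimage_mem_comap (Metric.ball_mem_nhds x (by linarith)))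
    · rintro _ ⟨g, hg, rfl⟩ _ ⟨g', hg', rfl⟩
      have hgg' : dist (g • y) (g' • y) < δ := by
        calc dist (g • y) (g' • y) ≤ dist (g • y) x + dist (g' • y) x := dist_triangle_right _ _ _
          _ < δ := by simp only [mem_setOf_eq] at hg hg'; linarith
      calc dist (g • z) (g' • z) ≤ ε/2 := hδ g g' hgg' z hz
        _ < ε := by linarith
  obtain ⟨c, hc⟩ := CompleteSpace.complete hcauchy
  exact tendsto_nhds_limUnder ⟨c, hc⟩

lemma bohr_tendsto_mul (y : X) (hy : IsBohrAlmostPeriodicPt (G := G) y) {x z : X}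
    (hx : x ∈ closure (MulAction.orbit G y)) (hz : z ∈ closure (MulAction.orbit G y)) :
    Tendsto (fun p : G × G => (p.1 * p.2) • y)
      ((comap (fun g : G => g • y) (𝓝 x)) ×ˢ (comap (fun g : G => g • y) (𝓝 z)))
      (𝓝 (bohrOp (G := G) y x z)) := by
  haveI := bohr_neBot y x hx
  haveI := bohr_neBot y z hz
  rw [Metric.tendsto_nhds]
  intro ε hε
  obtain ⟨δ, hδpos, hδ⟩ := bohr_star_aux y hy (show (0:ℝ) < ε/4 by linarith)
  have h1 : ∀ᶠ g in comap (fun g : G => g • y) (𝓝 x), dist (g • y) x < δ/2 :=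
    preimage_mem_comap (Metric.ball_mem_nhds x (by linarith))
  have h2 : ∀ᶠ g in comap (fun g : G => g • y) (𝓝 x), dist (g • z) (bohrOp (G := G) y x z) < ε/4 :=
    (bohr_tendsto_op y hy hx hz) (Metric.ball_mem_nhds _ (by linarith))
  obtain ⟨g', hg'1, hg'2⟩ := (h1.and h2).exists
  have hcont : ∀ᶠ w in 𝓝 z, dist (g' • w) (g' • z) < ε/4 :=
    ((continuous_const_smul g' : Continuous fun w : X => g' • w).tendsto z)
      (Metric.ball_mem_nhds _ (by linarith))
  have h3 : ∀ᶠ h in comap (fun g : G => g • y) (𝓝 z), dist (g' • (h • y)) (g' • z) < ε/4 :=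
    (tendsto_comap (f := fun g : G => g • y)).eventually hcont
  have key := (h1.prod_inl (comap (fun g : G => g • y) (𝓝 z))).and
    (h3.prod_inr (comap (fun g : G => g • y) (𝓝 x)))
  refine key.mono ?_
  rintro ⟨g, h⟩ ⟨hg, hh⟩
  have hyK : (h • y) ∈ closure (MulAction.orbit G y) :=
    subset_closure (MulAction.mem_orbit y h)
  have e1 : dist (g • (h • y)) (g' • (h • y)) ≤ ε/4 := by
    refine hδ g g' ?_ (h • y) hyK
    calc dist (g • y) (g' • y) ≤ dist (g • y) x + dist (g' • y) x := dist_triangle_right _ _ _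
      _ < δ := by linarith
  calc dist ((g * h) • y) (bohrOp (G := G) y x z)
      ≤ dist ((g * h) • y) (g' • (h • y)) + dist (g' • (h • y)) (g' • z)
          + dist (g' • z) (bohrOp (G := G) y x z) := dist_triangle4 _ _ _ _
    _ ≤ ε/4 + ε/4 + ε/4 := by
        refine add_le_add (add_le_add ?_ hh.le) hg'2.le
        rw [mul_smul]; exact e1
    _ < ε := by linarith

end BohrCore

section BohrMain

variable {G X : Type*} [CommMonoid G] [TopologicalSpace G] [ContinuousMul G]
    [MetricSpace X] [CompactSpace X] [MulAction G X] [ContinuousSMul G X]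

lemma bohr_dist_op_smul (y : X) (hy : IsBohrAlmostPeriodicPt (G := G) y) {ε : ℝ} (hε : 0 < ε) :
    ∃ δ > 0, ∀ x ∈ closure (MulAction.orbit G y), ∀ g : G, dist (g • y) x < δ →
      ∀ z ∈ closure (MulAction.orbit G y), dist (bohrOp (G := G) y x z) (g • z) ≤ ε := by
  obtain ⟨δ, hδpos, hδ⟩ := bohr_star_aux y hy (half_pos hε)
  refine ⟨δ/2, by linarith, fun x hx g hg z hz => ?_⟩
  haveI := bohr_neBot y x hx
  have key : ∀ t > (0:ℝ), dist (bohrOp (G := G) y x z) (g • z) ≤ ε/2 + t := by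
    intro t ht
    have h1 : ∀ᶠ g' in comap (fun g : G => g • y) (𝓝 x), dist (g' • y) x < δ/2 :=
      preimage_mem_comap (Metric.ball_mem_nhds x (by linarith))
    have h2 : ∀ᶠ g' in comap (fun g : G => g • y) (𝓝 x),
        dist (g' • z) (bohrOp (G := G) y x z) < t :=
      (bohr_tendsto_op y hy hx hz) (Metric.ball_mem_nhds _ ht)
    obtain ⟨g', hg'1, hg'2⟩ := (h1.and h2).exists
    have hgg' : dist (g' • y) (g • y) < δ := by
      calc dist (g' • y) (g • y) ≤ dist (g' • y) x + dist (g • y) x := dist_triangle_right _ _ _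
        _ < δ := by linarith
    calc dist (bohrOp (G := G) y x z) (g • z)
        ≤ dist (bohrOp (G := G) y x z) (g' • z) + dist (g' • z) (g • z) := dist_triangle _ _ _
      _ ≤ t + ε/2 := add_le_add (by rw [dist_comm]; exact hg'2.le) (hδ g' g hgg' z hz)
      _ = ε/2 + t := by ring
  have h := le_of_forall_pos_le_add key
  linarith

theorem orbit_closure_compact_abelian_semigroup'
    (y : X) (hy : IsBohrAlmostPeriodicPt (G := G) y) :
    ∃ op : X → X → X,
      ContinuousOn (fun p : X × X => op p.1 p.2)
        ((closure (MulAction.orbit G y)) ×ˢ (closure (MulAction.orbit G y))) ∧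
      (∀ x ∈ closure (MulAction.orbit G y), ∀ z ∈ closure (MulAction.orbit G y),
        op x z ∈ closure (MulAction.orbit G y)) ∧
      (∀ x ∈ closure (MulAction.orbit G y), ∀ z ∈ closure (MulAction.orbit G y),
        op x z = op z x) ∧
      (∀ x ∈ closure (MulAction.orbit G y), ∀ z ∈ closure (MulAction.orbit G y),
        ∀ w ∈ closure (MulAction.orbit G y), op (op x z) w = op x (op z w)) ∧
      (∀ g h : G, op (g • y) (h • y) = (g * h) • y) ∧
      (∀ x ∈ closure (MulAction.orbit G y), op y x = x ∧ op x y = x) ∧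
      (∀ g : G, ∀ x ∈ closure (MulAction.orbit G y), g • x = op (g • y) x) := by
  set K := closure (MulAction.orbit G y) with hK
  set op := bohrOp (G := G) y with hop
  have hyK : y ∈ K := subset_closure (MulAction.mem_orbit_self y)
  have horbK : ∀ g : G, g • y ∈ K := fun g => subset_closure (MulAction.mem_orbit y g)
  -- closedness under op
  have hmem : ∀ x ∈ K, ∀ z ∈ K, op x z ∈ K := by
    intro x hx z hz
    haveI := bohr_neBot y x hx
    haveI := bohr_neBot y z hz
    exact mem_closure_of_tendsto (bohr_tendsto_mul y hy hx hz)
      (Filter.Eventually.of_forall fun p => MulAction.mem_orbit y (p.1 * p.2))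
  -- commutativity
  have hcomm : ∀ x ∈ K, ∀ z ∈ K, op x z = op z x := by
    intro x hx z hz
    haveI := bohr_neBot y x hx
    haveI := bohr_neBot y z hz
    have hswap : Tendsto (fun p : G × G => (p.2, p.1))
        ((comap (fun g : G => g • y) (𝓝 x)) ×ˢ (comap (fun g : G => g • y) (𝓝 z)))
        ((comap (fun g : G => g • y) (𝓝 z)) ×ˢ (comap (fun g : G => g • y) (𝓝 x))) :=
      tendsto_snd.prodMk tendsto_fst
    have h2 : Tendsto (fun p : G × G => (p.1 * p.2) • y)
        ((comap (fun g : G => g • y) (𝓝 x)) ×ˢ (comap (fun g : G => g • y) (𝓝 z)))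
        (𝓝 (op z x)) := by
      have := (bohr_tendsto_mul y hy hz hx).comp hswap
      convert this using 2 with p
      · exact congrArg (· • y) (mul_comm p.1 p.2)
    exact tendsto_nhds_unique (bohr_tendsto_mul y hy hx hz) h2
  -- translation
  have htransl : ∀ g : G, ∀ x ∈ K, g • x = op (g • y) x := by
    intro g x hx
    haveI := bohr_neBot y (g • y) (horbK g)
    refine tendsto_nhds_unique ?_ (bohr_tendsto_op y hy (horbK g) hx)
    rw [Metric.tendsto_nhds]
    intro ε hε
    obtain ⟨δ, hδpos, hδ⟩ := bohr_star_aux y hy (half_pos hε)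
    have h1 : ∀ᶠ h in comap (fun g : G => g • y) (𝓝 (g • y)), dist (h • y) (g • y) < δ :=
      preimage_mem_comap (Metric.ball_mem_nhds _ hδpos)
    exact h1.mono fun h hh => lt_of_le_of_lt (hδ h g hh x hx) (by linarith)
  -- multiplication on orbit
  have hmul : ∀ g h : G, op (g • y) (h • y) = (g * h) • y := by
    intro g h
    rw [mul_smul]
    exact (htransl g (h • y) (horbK h)).symm
  -- identity
  have hid : ∀ x ∈ K, op y x = x ∧ op x y = x := by
    intro x hx
    haveI := bohr_neBot y x hx
    have h2 : op x y = x :=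
      tendsto_nhds_unique (bohr_tendsto_op y hy hx hyK) tendsto_comap
    exact ⟨(hcomm y hyK x hx).trans h2, h2⟩
  -- associativity
  have hassoc : ∀ x ∈ K, ∀ z ∈ K, ∀ w ∈ K, op (op x z) w = op x (op z w) := by
    intro x hx z hz w hw
    haveI := bohr_neBot y x hx
    haveI := bohr_neBot y z hz
    haveI := bohr_neBot y w hw
    have hxz : op x z ∈ K := hmem x hx z hz
    have hzw : op z w ∈ K := hmem z hz w hw
    have t1 : Tendsto (fun p : (G × G) × G => (p.1.1 * p.1.2, p.2))
        (((comap (fun g : G => g • y) (𝓝 x)) ×ˢ (comap (fun g : G => g • y) (𝓝 z))) ×ˢ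
          (comap (fun g : G => g • y) (𝓝 w)))
        ((comap (fun g : G => g • y) (𝓝 (op x z))) ×ˢ (comap (fun g : G => g • y) (𝓝 w))) :=
      by
        refine Tendsto.prodMk (tendsto_comap_iff.2 ?_) tendsto_snd
        exact (bohr_tendsto_mul y hy hx hz).comp tendsto_fst
    have h1 : Tendsto (fun p : (G × G) × G => ((p.1.1 * p.1.2) * p.2) • y)
        (((comap (fun g : G => g • y) (𝓝 x)) ×ˢ (comap (fun g : G => g • y) (𝓝 z))) ×ˢ
          (comap (fun g : G => g • y) (𝓝 w)))
        (𝓝 (op (op x z) w)) := (bohr_tendsto_mul y hy hxz hw).comp t1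
    have t2 : Tendsto (fun p : (G × G) × G => (p.1.1, p.1.2 * p.2))
        (((comap (fun g : G => g • y) (𝓝 x)) ×ˢ (comap (fun g : G => g • y) (𝓝 z))) ×ˢ
          (comap (fun g : G => g • y) (𝓝 w)))
        ((comap (fun g : G => g • y) (𝓝 x)) ×ˢ (comap (fun g : G => g • y) (𝓝 (op z w)))) :=
      by
        refine Tendsto.prodMk (tendsto_fst.comp tendsto_fst) (tendsto_comap_iff.2 ?_)
        exact (bohr_tendsto_mul y hy hz hw).comp
          ((tendsto_snd.comp tendsto_fst).prodMk tendsto_snd)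
    have h2 : Tendsto (fun p : (G × G) × G => (p.1.1 * (p.1.2 * p.2)) • y)
        (((comap (fun g : G => g • y) (𝓝 x)) ×ˢ (comap (fun g : G => g • y) (𝓝 z))) ×ˢ
          (comap (fun g : G => g • y) (𝓝 w)))
        (𝓝 (op x (op z w))) := (bohr_tendsto_mul y hy hx hzw).comp t2
    have heq : (fun p : (G × G) × G => ((p.1.1 * p.1.2) * p.2) • y)
        = fun p : (G × G) × G => (p.1.1 * (p.1.2 * p.2)) • y := by
      funext p; rw [mul_assoc]
    rw [heq] at h1
    exact tendsto_nhds_unique h1 h2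
  -- continuity
  have hconts : ContinuousOn (fun p : X × X => op p.1 p.2) (K ×ˢ K) := by
    rintro ⟨x₀, z₀⟩ ⟨hx₀, hz₀⟩
    rw [Metric.continuousWithinAt_iff]
    intro ε hε
    obtain ⟨δ, hδpos, hδ⟩ := bohr_dist_op_smul y hy (show (0:ℝ) < ε/8 by linarith)
    haveI := bohr_neBot y x₀ hx₀
    have hball : ∀ᶠ g in comap (fun g : G => g • y) (𝓝 x₀), dist (g • y) x₀ < δ/2 :=
      preimage_mem_comap (Metric.ball_mem_nhds x₀ (half_pos hδpos))
    obtain ⟨g', hg'⟩ := hball.exists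
    obtain ⟨δ₃, hδ₃pos, hδ₃⟩ := Metric.continuousAt_iff.1
      ((continuous_const_smul g' : Continuous fun w : X => g' • w).continuousAt (x := z₀))
      (ε/8) (by linarith)
    refine ⟨min (δ/2) δ₃, lt_min (half_pos hδpos) hδ₃pos, ?_⟩
    rintro ⟨x, z⟩ ⟨hxK, hzK⟩ hdist
    rw [Prod.dist_eq] at hdist
    have hdx : dist x x₀ < δ/2 :=
      lt_of_lt_of_le (lt_of_le_of_lt (le_max_left _ _) hdist) (min_le_left _ _)
    have hdz : dist z z₀ < δ₃ :=
      lt_of_lt_of_le (lt_of_le_of_lt (le_max_right _ _) hdist) (min_le_right _ _)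
    have hx' : dist (g' • y) x < δ := by
      calc dist (g' • y) x ≤ dist (g' • y) x₀ + dist x₀ x := dist_triangle _ _ _
        _ < δ := by rw [dist_comm x₀ x]; linarith
    have e1 : dist (op x z) (g' • z) ≤ ε/8 := hδ x hxK g' hx' z hzK
    have e2 : dist (g' • z) (g' • z₀) < ε/8 := hδ₃ hdz
    have e3 : dist (op x₀ z₀) (g' • z₀) ≤ ε/8 := hδ x₀ hx₀ g' (lt_of_lt_of_le hg' (by linarith)) z₀ hz₀
    calc dist (op x z) (op x₀ z₀)
        ≤ dist (op x z) (g' • z) + dist (g' • z) (g' • z₀)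
            + dist (g' • z₀) (op x₀ z₀) := dist_triangle4 _ _ _ _
      _ < ε := by rw [dist_comm (g' • z₀) (op x₀ z₀)]; linarith
  exact ⟨op, hconts, hmem, hcomm, hassoc, hmul, hid, htransl⟩

end BohrMain

/-- Structure theorem: the orbit closure of a Bohr almost periodic point of a
topological abelian semigroup action is a compact abelian topological semigroup
with identity `y`, on which `G` acts by translations. -/
theorem orbit_closure_compact_abelian_semigroup
    {G X : Type*} [CommMonoid G] [TopologicalSpace G] [ContinuousMul G]
    [MetricSpace X] [CompactSpace X] [MulAction G X] [ContinuousSMul G X]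
    (y : X) (hy : IsBohrAlmostPeriodicPt (G := G) y) :
    ∃ op : X → X → X,
      ContinuousOn (fun p : X × X => op p.1 p.2)
        ((closure (MulAction.orbit G y)) ×ˢ (closure (MulAction.orbit G y))) ∧
      (∀ x ∈ closure (MulAction.orbit G y), ∀ z ∈ closure (MulAction.orbit G y),
        op x z ∈ closure (MulAction.orbit G y)) ∧
      (∀ x ∈ closure (MulAction.orbit G y), ∀ z ∈ closure (MulAction.orbit G y),
        op x z = op z x) ∧
      (∀ x ∈ closure (MulAction.orbit G y), ∀ z ∈ closure (MulAction.orbit G y),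
        ∀ w ∈ closure (MulAction.orbit G y), op (op x z) w = op x (op z w)) ∧
      (∀ g h : G, op (g • y) (h • y) = (g * h) • y) ∧
      (∀ x ∈ closure (MulAction.orbit G y), op y x = x ∧ op x y = x) ∧
      (∀ g : G, ∀ x ∈ closure (MulAction.orbit G y), g • x = op (g • y) x) :=
  orbit_closure_compact_abelian_semigroup' y hy
end

section
/- Let $G$ be a topological abelian semigroup acting continuously on a compact metric space $X$, and suppose $y \in X$ is a Bohr almost periodic point with $X = \mathrm{cls}_X G(y)$. Then the action $G \curvearrowright X$ is uniquely ergodic: there is exactly one $G$-invariant Borel probability measure on $X$. -/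
open MeasureTheory MulAction Set Pointwise

/-!
Writing `g = σ ℓ` with `σ` an `ε`-almost period of `y` and `ℓ` in a compact set shows that the
maps `x ↦ g • x` are uniformly equicontinuous. As `G` is commutative, closeness of `g • y` and
`g' • y` then forces `g • v` and `g' • v` to be close for every `v` of the orbit closure `X`, so
`(g • y, v) ↦ g • v` extends to a continuous commutative semigroup law on `X` in which `g • y`
acts by `g`. Hence `G`-invariant probability measures are exactly the translation-invariant
ones. Two such measures `μ`, `ν` agree because, by Fubini, `∬ F (u * v) dμ(u) dν(v)` equals both
`∫ F dμ` and `∫ F dν`; one exists because the minimal ideal `⋂ u, u * X` is a compact group,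
whose Haar measure pushed forward to `X` is invariant.
-/

open scoped BoundedContinuousFunction

noncomputable abbrev CommGroup.ofExistsMulEq (M : Type*) [CommSemigroup M] [Nonempty M]
    (h : ∀ a b : M, ∃ x, a * x = b) : CommGroup M :=
  let a₀ : M := Classical.arbitrary M
  let e : M := (h a₀ a₀).choose
  have one_mul (b : M) : e * b = b := by
    obtain ⟨x, rfl⟩ := h a₀ b
    rw [← mul_assoc, mul_comm e, (h a₀ a₀).choose_spec]
  { ‹CommSemigroup M› with
    one := e
    one_mul
    mul_one := fun b => (mul_comm b e).trans (one_mul b)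
    inv := fun a => (h a e).choose
    inv_mul_cancel := fun a => (mul_comm _ a).trans (h a e).choose_spec }

theorem continuousInv_of_compactSpace {M : Type*} [Group M] [TopologicalSpace M]
    [ContinuousMul M] [CompactSpace M] [T1Space M] : ContinuousInv M := by
  refine ⟨continuous_iff_isClosed.2 fun C hC => ?_⟩
  have : (·⁻¹) ⁻¹' C = Prod.fst '' {p : M × M | p.1 * p.2 = 1 ∧ p.2 ∈ C} := by
    ext a
    simp [mul_eq_one_iff_eq_inv']
  rw [this]
  exact isClosedMap_fst_of_compactSpace _
    ((isClosed_singleton.preimage continuous_mul).inter (hC.preimage continuous_snd))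

section CompactSemigroup

variable {S : Type*} [CommSemigroup S]

theorem mul_mem_iInter_range_mul (a : S) {k : S} (hk : k ∈ ⋂ u : S, range (u * ·)) :
    a * k ∈ ⋂ u : S, range (u * ·) := by
  simp only [mem_iInter, mem_range] at hk ⊢
  intro u
  obtain ⟨x, rfl⟩ := hk u
  exact ⟨a * x, mul_left_comm u a x⟩

-- `⋂ u, range (u * ·)` lies in every ideal, so it is the least one as soon as it is nonempty.
def minimalIdeal (S : Type*) [CommSemigroup S] : Subsemigroup S where
  carrier := ⋂ u : S, range (u * ·)
  mul_mem' _ := mul_mem_iInter_range_mul _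

theorem mem_minimalIdeal {k : S} : k ∈ minimalIdeal S ↔ ∀ u : S, ∃ x, u * x = k := by
  simp [minimalIdeal]

theorem exists_mul_eq_of_mem_minimalIdeal (a b : minimalIdeal S) :
    ∃ x : minimalIdeal S, a * x = b := by
  obtain ⟨z, hz⟩ := mem_minimalIdeal.1 b.2 (a * a)
  refine ⟨⟨a * z, mul_comm z a ▸ mul_mem_iInter_range_mul z a.2⟩, Subtype.ext ?_⟩
  simpa [mul_assoc] using hz

variable [TopologicalSpace S] [ContinuousMul S]

theorem eq_of_forall_map_mul_left_eq_self [TopologicalSpace.PseudoMetrizableSpace S]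
    [SecondCountableTopology S] [MeasurableSpace S] [BorelSpace S] {μ ν : Measure S}
    [IsProbabilityMeasure μ] [IsProbabilityMeasure ν] (hμ : ∀ u, μ.map (u * ·) = μ)
    (hν : ∀ u, ν.map (u * ·) = ν) : μ = ν := by
  have integral_mul_left {ρ : Measure S} (hρ : ∀ u, ρ.map (u * ·) = ρ) (F : S →ᵇ ℝ) (u : S) :
      ∫ x, F (u * x) ∂ρ = ∫ x, F x ∂ρ := by
    conv_rhs => rw [← hρ u]
    exact (integral_map (continuous_const_mul u).aemeasurable
      F.continuous.aestronglyMeasurable).symm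
  refine ext_of_forall_integral_eq_of_IsFiniteMeasure fun F => ?_
  have hint : Integrable (fun p : S × S => F (p.1 * p.2)) (μ.prod ν) :=
    (F.compContinuous ⟨_, continuous_mul⟩).integrable _
  calc ∫ x, F x ∂μ = ∫ v, ∫ u, F (u * v) ∂μ ∂ν := by
        simp_rw [mul_comm _ (_ : S), integral_mul_left hμ, integral_const, probReal_univ, one_smul]
    _ = ∫ u, ∫ v, F (u * v) ∂ν ∂μ := (integral_integral_swap hint).symm
    _ = ∫ x, F x ∂ν := by
        simp_rw [integral_mul_left hν, integral_const, probReal_univ, one_smul]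

variable [CompactSpace S] [T2Space S]

theorem isClosed_minimalIdeal : IsClosed (minimalIdeal S : Set S) :=
  isClosed_iInter fun u => (isCompact_range (continuous_const_mul u)).isClosed

theorem nonempty_minimalIdeal [Nonempty S] : (minimalIdeal S : Set S).Nonempty := by
  refine IsCompact.nonempty_iInter_of_directed_nonempty_isCompact_isClosed _ ?_
    (fun u => range_nonempty _) (fun u => isCompact_range (continuous_const_mul u))
    (fun u => (isCompact_range (continuous_const_mul u)).isClosed)
  intro u v
  refine ⟨u * v, ?_, ?_⟩ <;> rintro _ ⟨w, rfl⟩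
  · exact ⟨v * w, (mul_assoc u v w).symm⟩
  · exact ⟨u * w, by simp only [← mul_assoc, mul_comm v u]⟩

theorem exists_forall_map_mul_left_eq_self [Nonempty S] [MeasurableSpace S] [BorelSpace S] :
    ∃ μ : Measure S, IsProbabilityMeasure μ ∧ ∀ u : S, μ.map (u * ·) = μ := by
  let K := minimalIdeal S
  have : Nonempty K := nonempty_minimalIdeal.to_subtype
  let : CommGroup K := CommGroup.ofExistsMulEq K exists_mul_eq_of_mem_minimalIdeal
  have : CompactSpace K := isCompact_iff_compactSpace.1 isClosed_minimalIdeal.isCompact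
  have : ContinuousInv K := continuousInv_of_compactSpace
  have : IsTopologicalGroup K := ⟨⟩
  let μK : Measure K := Measure.haarMeasure ⊤
  have : IsProbabilityMeasure μK := ⟨by
    rw [← TopologicalSpace.PositiveCompacts.coe_top]; exact Measure.haarMeasure_self⟩
  have hmeas : Measurable ((↑) : K → S) := measurable_subtype_coe
  refine ⟨μK.map (↑), Measure.isProbabilityMeasure_map hmeas.aemeasurable, fun u => ?_⟩
  let c : K := ⟨u * (1 : K), mul_mem_iInter_range_mul u (1 : K).2⟩
  have hc : (u * ·) ∘ ((↑) : K → S) = (↑) ∘ (c * ·) := by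
    funext k
    show u * (k : S) = u * ((1 : K) : S) * k
    rw [mul_assoc, ← MulMemClass.coe_mul, one_mul]
  rw [Measure.map_map (continuous_const_mul u).measurable hmeas, hc,
    ← Measure.map_map hmeas (continuous_const_mul c).measurable, map_mul_left_eq_self]

end CompactSemigroup

theorem equicontinuous_smul_of_isCompact {G X : Type*} [TopologicalSpace G] [UniformSpace X]
    [SMul G X] [ContinuousSMul G X] {L : Set G} (hL : IsCompact L) :
    Equicontinuous fun ℓ : L => ((ℓ : G) • · : X → X) := by
  intro x U hU
  obtain ⟨V, hV, hVU⟩ := hL.mem_uniformity_of_prod (f := fun (x : X) (g : G) => g • x)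
    (s := univ) (continuous_smul.comp continuous_swap).continuousOn (mem_univ x)
    (symm_le_uniformity hU)
  exact Filter.mem_of_superset (nhdsWithin_univ x ▸ hV) fun x' hx' ℓ => hVU x' hx' ℓ ℓ.2

section Dynamics

variable {G X : Type*} [Monoid G] [MetricSpace X] [MulAction G X]

theorem dist_smul_le_of_forall_dist_orbit_lt [ContinuousConstSMul G X] {y : X}
    (hd : Dense (orbit G y)) {ε : ℝ} {σ : G} (hσ : ∀ g : G, dist (g • y) ((σ * g) • y) < ε)
    (x : X) : dist x (σ • x) ≤ ε := by
  refine closure_minimal ?_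
    (isClosed_le (continuous_id.dist (continuous_const_smul σ)) continuous_const) (hd x)
  rintro _ ⟨g, rfl⟩
  show dist (g • y) (σ • g • y) ≤ ε
  exact smul_smul σ g y ▸ (hσ g).le

theorem IsBohrAlmostPeriodicPt.uniformEquicontinuous_smul [TopologicalSpace G]
    [ContinuousSMul G X] [CompactSpace X] {y : X} (hy : IsBohrAlmostPeriodicPt (G := G) y)
    (hd : Dense (orbit G y)) : UniformEquicontinuous fun g : G => (g • · : X → X) := by
  rw [Metric.uniformEquicontinuous_iff]
  intro ε hε
  obtain ⟨L, hL, hSL⟩ := hy (ε / 3) (by positivity)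
  obtain ⟨δ, hδ, hLδ⟩ := Metric.uniformEquicontinuous_iff.1
    (CompactSpace.uniformEquicontinuous_of_equicontinuous
      (equicontinuous_smul_of_isCompact (X := X) hL)) (ε / 3) (by positivity)
  refine ⟨δ, hδ, fun a b hab g => ?_⟩
  obtain ⟨σ, hσ, ℓ, hℓ, rfl⟩ : g ∈ {τ : G | ∀ g : G, dist (g • y) ((τ * g) • y) < ε / 3} * L :=
    hSL ▸ mem_univ g
  have hσ' := dist_smul_le_of_forall_dist_orbit_lt hd hσ
  calc dist ((σ * ℓ) • a) ((σ * ℓ) • b)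
      ≤ dist (σ • ℓ • a) (ℓ • a) + dist (ℓ • a) (ℓ • b) + dist (ℓ • b) (σ • ℓ • b) := by
        rw [mul_smul, mul_smul]; exact dist_triangle4 _ _ _ _
    _ < ε := by
        linarith [(dist_comm _ _).trans_le (hσ' (ℓ • a)), hLδ a b hab ⟨ℓ, hℓ⟩, hσ' (ℓ • b)]

end Dynamics

section Commutative

variable {G X : Type*} [CommMonoid G] [MetricSpace X] [MulAction G X] {y : X}

theorem exists_forall_dist_smul_le_of_dist_orbit_lt [ContinuousConstSMul G X]
    (he : UniformEquicontinuous fun g : G => (g • · : X → X)) (hd : Dense (orbit G y))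
    {ε : ℝ} (hε : 0 < ε) :
    ∃ δ > 0, ∀ g g' : G, dist (g • y) (g' • y) < δ → ∀ v : X, dist (g • v) (g' • v) ≤ ε := by
  obtain ⟨δ, hδ, hδε⟩ := Metric.uniformEquicontinuous_iff.1 he ε hε
  refine ⟨δ, hδ, fun g g' h v => closure_minimal ?_ (isClosed_le
    ((continuous_const_smul g).dist (continuous_const_smul g')) continuous_const) (hd v)⟩
  rintro _ ⟨k, rfl⟩
  show dist (g • k • y) (g' • k • y) ≤ ε
  rw [smul_comm g k, smul_comm g' k]
  exact (hδε _ _ h k).le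

theorem smul_eq_smul_of_smul_orbit_eq [ContinuousConstSMul G X]
    (he : UniformEquicontinuous fun g : G => (g • · : X → X)) (hd : Dense (orbit G y))
    {g g' : G} (h : g • y = g' • y) (v : X) : g • v = g' • v :=
  eq_of_forall_dist_le fun _ hε =>
    let ⟨_, hδ, H⟩ := exists_forall_dist_smul_le_of_dist_orbit_lt he hd hε
    H g g' (by rwa [h, dist_self]) v

theorem exists_continuous_orbit_mul [ContinuousConstSMul G X] [CompactSpace X]
    (he : UniformEquicontinuous fun g : G => (g • · : X → X)) (hd : Dense (orbit G y)) :
    ∃ m : X × X → X, Continuous m ∧ ∀ (g : G) (v : X), m (g • y, v) = g • v := by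
  let pk : orbit G y → G := fun u => (mem_orbit_iff.1 u.2).choose
  have hpk (u : orbit G y) : pk u • y = u := (mem_orbit_iff.1 u.2).choose_spec
  let f : orbit G y × X → X := fun p => pk p.1 • p.2
  have hf : UniformContinuous f := by
    rw [Metric.uniformContinuous_iff]
    intro ε hε
    obtain ⟨δ₁, hδ₁, h₁⟩ := Metric.uniformEquicontinuous_iff.1 he (ε / 2) (by positivity)
    obtain ⟨δ₂, hδ₂, h₂⟩ := exists_forall_dist_smul_le_of_dist_orbit_lt he hd
      (show 0 < ε / 4 by positivity)
    refine ⟨min δ₁ δ₂, by positivity, fun {p q} hpq => ?_⟩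
    rw [Prod.dist_eq, max_lt_iff, lt_min_iff, lt_min_iff, Subtype.dist_eq] at hpq
    calc dist (f p) (f q)
        ≤ dist (pk p.1 • p.2) (pk p.1 • q.2) + dist (pk p.1 • q.2) (pk q.1 • q.2) :=
          dist_triangle _ _ _
      _ < ε := by
          linarith [h₁ _ _ hpq.2.1 (pk p.1),
            h₂ (pk p.1) (pk q.1) (by rw [hpk, hpk]; exact hpq.1.2) q.2]
  let e : orbit G y × X → X × X := fun p => (p.1, p.2)
  have he_ind : IsUniformInducing e :=
    isUniformEmbedding_subtype_val.isUniformInducing.prod IsUniformInducing.id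
  have he_dense : DenseRange e := hd.denseRange_val.prodMap denseRange_id
  refine ⟨(he_ind.isDenseInducing he_dense).extend f,
    (uniformContinuous_uniformly_extend he_ind he_dense hf).continuous, fun g v => ?_⟩
  rw [show ((g • y, v) : X × X) = e (⟨g • y, mem_orbit y g⟩, v) from rfl,
    uniformly_extend_of_ind he_ind he_dense hf]
  exact smul_eq_smul_of_smul_orbit_eq he hd (hpk _) v

theorem exists_commSemigroup_of_dense_orbit [ContinuousConstSMul G X] [CompactSpace X]
    (he : UniformEquicontinuous fun g : G => (g • · : X → X)) (hd : Dense (orbit G y)) :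
    ∃ _ : CommSemigroup X, ContinuousMul X ∧ ∀ (g : G) (v : X), g • y * v = g • v := by
  obtain ⟨m, hm, hmg⟩ := exists_continuous_orbit_mul he hd
  have comm (u v : X) : m (u, v) = m (v, u) := by
    refine congrFun (Continuous.ext_on (hd.prod hd) hm (hm.comp continuous_swap) ?_) (u, v)
    rintro ⟨_, _⟩ ⟨⟨a, rfl⟩, ⟨b, rfl⟩⟩
    simp [hmg, smul_smul, mul_comm]
  have assoc (u v w : X) : m (m (u, v), w) = m (u, m (v, w)) := by
    refine congrFun (Continuous.ext_on (hd.prod (hd.prod hd))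
      (f := fun p : X × X × X => m (m (p.1, p.2.1), p.2.2))
      (g := fun p : X × X × X => m (p.1, m (p.2.1, p.2.2))) (by fun_prop) (by fun_prop) ?_)
      (u, v, w)
    rintro ⟨_, _, _⟩ ⟨⟨a, rfl⟩, ⟨b, rfl⟩, ⟨c, rfl⟩⟩
    simp [hmg, smul_smul, mul_assoc]
  let : CommSemigroup X := { mul := fun u v => m (u, v), mul_assoc := assoc, mul_comm := comm }
  exact ⟨_, ⟨hm⟩, hmg⟩

end Commutative

section Invariance

variable {G X : Type*} [SMul G X] [TopologicalSpace X] [TopologicalSpace.PseudoMetrizableSpace X]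
  [CompactSpace X] [Mul X] [ContinuousMul X] [MeasurableSpace X] [BorelSpace X]

theorem forall_map_smul_eq_iff_forall_map_mul_left_eq {y : X} (hd : Dense (orbit G y))
    (hmul : ∀ (g : G) (v : X), g • y * v = g • v) (μ : Measure X) [IsFiniteMeasure μ] :
    (∀ g : G, μ.map (g • ·) = μ) ↔ ∀ u : X, μ.map (u * ·) = μ := by
  have hsmul (g : G) : (g • · : X → X) = (g • y * ·) := funext fun v => (hmul g v).symm
  refine ⟨fun h u => ext_of_forall_integral_eq_of_IsFiniteMeasure fun F => ?_,
    fun h g => hsmul g ▸ h _⟩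
  have integral_map_mul (u : X) : ∫ x, F x ∂μ.map (u * ·) = ∫ x, F (u * x) ∂μ :=
    integral_map (continuous_const_mul u).aemeasurable F.continuous.aestronglyMeasurable
  have hcont : Continuous fun u => ∫ x, F (u * x) ∂μ := by
    simpa using continuous_parametric_integral_of_continuous (μ := μ)
      (f := fun u x => F (u * x)) (by fun_prop) isCompact_univ
  rw [integral_map_mul]
  refine congrFun (hcont.ext_on hd continuous_const ?_) u
  rintro _ ⟨g, rfl⟩
  show ∫ x, F (g • y * x) ∂μ = ∫ x, F x ∂μ
  rw [← integral_map_mul, ← hsmul, h]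

end Invariance

theorem uniquely_ergodic_of_bohr_almost_periodic_general
    {G X : Type*} [CommMonoid G] [TopologicalSpace G]
    [MetricSpace X] [CompactSpace X] [MulAction G X] [ContinuousSMul G X]
    [MeasurableSpace X] [BorelSpace X]
    (y : X) (hy : IsBohrAlmostPeriodicPt (G := G) y)
    (hdense : closure (MulAction.orbit G y) = Set.univ) :
    ∃! μ : Measure X, IsProbabilityMeasure μ ∧
      ∀ g : G, Measure.map (fun x => g • x) μ = μ := by
  have hd : Dense (orbit G y) := dense_iff_closure_eq.2 hdense
  obtain ⟨_, _, hmul⟩ := exists_commSemigroup_of_dense_orbit (hy.uniformEquicontinuous_smul hd) hd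
  have hinv := forall_map_smul_eq_iff_forall_map_mul_left_eq hd hmul
  have : Nonempty X := ⟨y⟩
  obtain ⟨μ, hμ, hμinv⟩ := exists_forall_map_mul_left_eq_self (S := X)
  refine ⟨μ, ⟨hμ, (hinv μ).2 hμinv⟩, fun ν ⟨hν, hνinv⟩ => ?_⟩
  exact eq_of_forall_map_mul_left_eq_self ((hinv ν).1 hνinv) hμinv

/-- An action of a topological abelian semigroup with a dense Bohr almost
periodic orbit is uniquely ergodic. -/
theorem uniquely_ergodic_of_bohr_almost_periodic
    {G X : Type*} [CommMonoid G] [TopologicalSpace G] [ContinuousMul G]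
    [MetricSpace X] [CompactSpace X] [MulAction G X] [ContinuousSMul G X]
    [MeasurableSpace X] [BorelSpace X]
    (y : X) (hy : IsBohrAlmostPeriodicPt (G := G) y)
    (hdense : closure (MulAction.orbit G y) = Set.univ) :
    ∃! μ : Measure X, IsProbabilityMeasure μ ∧
      ∀ g : G, Measure.map (fun x => g • x) μ = μ :=
  uniquely_ergodic_of_bohr_almost_periodic_general y hy hdense
end

section
/- Let $G$ be a locally compact second countable abelian semigroup with a left quasi-Haar measure $\lambda_G$, acting continuously on a compact metric space $X$ with a Bohr almost periodic point $y$ such that $X = \mathrm{cls}_X G(y)$, and let $\mu$ be the unique $G$-invariant Borel probability measure on $X$. Let $(F_n)_{n=1}^\infty$ be a Følner sequence of compact subsets of $G$ with respect to $\lambda_G$. Then for every continuous $\varphi : X \to \mathbb{R}$ and every $x \in X$, $\frac{1}{\lambda_G(F_n)} \int_{F_n} \varphi(g(x))\, d\lambda_G(g) \to \int_X \varphi \, d\mu$ as $n \to \infty$. -/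
/-!
Almost periods of `y` remain almost periods at every point of `X = cls (G • y)`, and together with
the compactness of the syndetic complement `L` this makes the maps `z ↦ g • z` (`g : G`)
equicontinuous. Hence the Følner averages `A n z = ⨍_{F n} φ (g • z) dλ` are equicontinuous in `n`.
The Følner property gives `A n (g • y) - A n y → 0`, and equicontinuity spreads this from the orbit
of `y` to all of `X`. As `μ` is invariant, `∫ A n dμ = ∫ φ dμ`, so dominated convergence in
`A n x - ∫ φ dμ = ∫ (A n x - A n z) dμ(z)` gives the claim.

Quasi-invariance only lets `λ` be translated by elements of the set it measures; still, the
push-forward of `λ|F` under `t ↦ g * t` is dominated by `λ|gF`, which suffices for the Følner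
estimate.
-/

open MeasureTheory MulAction Set Pointwise Filter Topology

open ProbabilityTheory
open scoped BoundedContinuousFunction

theorem abs_integral_sub_integral_le_of_le {α : Type*} [MeasurableSpace α] {ν ρ : Measure α}
    [IsFiniteMeasure ρ] (hνρ : ν ≤ ρ) {f : α → ℝ} (hf : Integrable f ρ) {C : ℝ}
    (hC : ∀ x, |f x| ≤ C) :
    |∫ x, f x ∂ρ - ∫ x, f x ∂ν| ≤ C * (ρ univ - ν univ).toReal := by
  have : IsFiniteMeasure ν := isFiniteMeasure_of_le ρ hνρ
  have hsplit : ∫ x, f x ∂ρ - ∫ x, f x ∂ν = ∫ x, f x ∂(ρ - ν) := by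
    conv_lhs => rw [← Measure.sub_add_cancel_of_le hνρ]
    rw [integral_add_measure (hf.mono_measure Measure.sub_le) (hf.mono_measure hνρ),
      add_sub_cancel_right]
  rw [hsplit, ← Real.norm_eq_abs, ← Measure.sub_apply MeasurableSet.univ hνρ]
  exact norm_integral_le_of_norm_le_const (Eventually.of_forall hC)

theorem integral_cond_eq_inv_mul_setIntegral {α : Type*} [MeasurableSpace α] (μ : Measure α)
    (s : Set α) (f : α → ℝ) : ∫ x, f x ∂μ[|s] = (μ.real s)⁻¹ * ∫ x in s, f x ∂μ :=
  (setAverage_eq' μ f s).symm.trans (setAverage_eq μ f s)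

theorem Equicontinuous.integral {ι Y X : Type*} [MeasurableSpace Y] [TopologicalSpace X]
    {Φ : Y → X → ℝ} (hΦ : Equicontinuous Φ) (ν : ι → Measure Y)
    [∀ i, IsProbabilityMeasure (ν i)] (hint : ∀ i x, Integrable (fun t => Φ t x) (ν i)) :
    Equicontinuous fun i x => ∫ t, Φ t x ∂ν i := by
  intro x₀
  rw [Metric.equicontinuousAt_iff_right]
  intro ε hε
  filter_upwards [Metric.equicontinuousAt_iff_right.1 (hΦ x₀) (ε / 2) (half_pos hε)] with x hx i
  rw [dist_eq_norm, ← integral_sub (hint i x₀) (hint i x)]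
  calc ‖∫ t, (Φ t x₀ - Φ t x) ∂ν i‖ ≤ ε / 2 * (ν i).real univ :=
        norm_integral_le_of_norm_le_const (Eventually.of_forall fun t => (hx t).le)
    _ < ε := by simp [half_lt_self hε]

theorem tendsto_of_integral_eq_of_tendsto_sub {X : Type*} [MeasurableSpace X] (μ : Measure X)
    [IsProbabilityMeasure μ] {A : ℕ → X → ℝ} {C c : ℝ}
    (hmeas : ∀ n, AEStronglyMeasurable (A n) μ) (hbound : ∀ n z, |A n z| ≤ C)
    (hint : ∀ n, ∫ z, A n z ∂μ = c) {x : X}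
    (hx : ∀ z, Tendsto (fun n => A n x - A n z) atTop (𝓝 0)) :
    Tendsto (fun n => A n x) atTop (𝓝 c) := by
  have hdom : Tendsto (fun n => ∫ z, (A n x - A n z) ∂μ) atTop (𝓝 (∫ _, (0 : ℝ) ∂μ)) :=
    tendsto_integral_of_dominated_convergence (fun _ => 2 * C)
      (fun n => aestronglyMeasurable_const.sub (hmeas n)) (integrable_const _)
      (fun n => Eventually.of_forall fun z => by
        rw [Real.norm_eq_abs, two_mul]
        exact (abs_sub _ _).trans (add_le_add (hbound n x) (hbound n z)))
      (Eventually.of_forall hx)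
  have heq : ∀ n, ∫ z, (A n x - A n z) ∂μ = A n x - c := fun n => by
    rw [integral_sub (integrable_const _)
      (Integrable.of_bound (hmeas n) C (Eventually.of_forall (hbound n))), integral_const,
      hint n, probReal_univ, one_smul]
  simpa [heq] using hdom.add_const c

theorem integral_integral_smul_eq {G X : Type*} [TopologicalSpace G] [MeasurableSpace G]
    [OpensMeasurableSpace G] [MetricSpace X] [CompactSpace X] [MeasurableSpace X] [BorelSpace X]
    [SMul G X] [ContinuousSMul G X] {μ : Measure X} [IsFiniteMeasure μ]
    (hinv : ∀ g : G, μ.map (g • ·) = μ) (ν : Measure G) [IsProbabilityMeasure ν]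
    (φ : C(X, ℝ)) : ∫ z, ∫ t, φ (t • z) ∂ν ∂μ = ∫ z, φ z ∂μ := by
  have hint : Integrable (Function.uncurry fun z (t : G) => φ (t • z)) (μ.prod ν) :=
    ((BoundedContinuousFunction.mkOfCompact φ).compContinuous
      ⟨fun p : X × G => p.2 • p.1, continuous_smul.comp continuous_swap⟩).integrable _
  rw [integral_integral_swap hint]
  have hinner : ∀ t : G, ∫ z, φ (t • z) ∂μ = ∫ z, φ z ∂μ := fun t => by
    conv_rhs => rw [← hinv t]
    exact (integral_map (continuous_const_smul t).aemeasurable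
      φ.continuous.aestronglyMeasurable).symm
  simp [hinner]

def IsAsymptoticallyInvariant {G : Type*} [Mul G] [TopologicalSpace G] [MeasurableSpace G]
    (ν : ℕ → Measure G) : Prop :=
  ∀ (f : G →ᵇ ℝ) (g : G), Tendsto (fun n => ∫ t, f (g * t) ∂ν n - ∫ t, f t ∂ν n) atTop (𝓝 0)

def IsQuasiLeftInvariant {G : Type*} [Mul G] [TopologicalSpace G] [MeasurableSpace G]
    (μ : Measure G) : Prop :=
  ∀ K : Set G, IsCompact K → ∀ g ∈ K, μ ((fun t => g * t) '' K) = μ K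

namespace IsQuasiLeftInvariant

variable {G : Type*} [Mul G] [TopologicalSpace G] [MeasurableSpace G] {μ : Measure G}

theorem measure_singleton_mul_self (hμ : IsQuasiLeftInvariant μ) (g : G) :
    μ {g * g} = μ {g} := by
  simpa [image_singleton] using hμ {g} isCompact_singleton g rfl

variable [ContinuousMul G] [T2Space G] [BorelSpace G] [IsFiniteMeasureOnCompacts μ]

theorem measure_preimage_mul_left_inter (hμ : IsQuasiLeftInvariant μ) {K C : Set G}
    (hK : IsCompact K) {g : G} (hg : g ∈ K) (hC : IsClosed C) :
    μ ((g * ·) ⁻¹' C ∩ K) = μ (C ∩ (g * ·) '' K) := by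
  set B := (g * ·) ⁻¹' C ∩ K
  -- Adjoin `g` to make `hμ` applicable; the atoms `{g}` and `{g * g}` it adds have equal mass.
  have hB : IsCompact B := hK.inter_left (hC.preimage (continuous_const_mul g))
  have key := hμ _ (hB.insert g) g (mem_insert g B)
  rw [image_insert_eq, image_preimage_inter] at key
  by_cases hgg : g * g ∈ C
  · rw [insert_eq_of_mem (mem_inter (mem_preimage.2 hgg) hg : g ∈ B),
      insert_eq_of_mem (mem_inter hgg (mem_image_of_mem _ hg))] at key
    exact key.symm
  · have hCK : MeasurableSet (C ∩ (g * ·) '' K) :=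
      hC.measurableSet.inter (hK.image (continuous_const_mul g)).measurableSet
    rw [insert_eq, insert_eq,
      measure_union (disjoint_singleton_left.2 fun h => hgg h.1) hCK,
      measure_union (disjoint_singleton_left.2 fun h => hgg h.1) hB.measurableSet,
      hμ.measure_singleton_mul_self] at key
    exact (ENNReal.add_right_inj isCompact_singleton.measure_lt_top.ne).1 key.symm

theorem map_restrict_eq (hμ : IsQuasiLeftInvariant μ) {K : Set G} (hK : IsCompact K) {g : G}
    (hg : g ∈ K) : (μ.restrict K).map (g * ·) = μ.restrict ((g * ·) '' K) := by
  have : IsFiniteMeasure (μ.restrict K) := isFiniteMeasure_restrict.2 hK.measure_lt_top.ne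
  have hmeas : Measurable (g * ·) := (continuous_const_mul g).measurable
  have hclosed : ∀ C : Set G, IsClosed C →
      (μ.restrict K).map (g * ·) C = μ.restrict ((g * ·) '' K) C := fun C hC => by
    rw [Measure.map_apply hmeas hC.measurableSet,
      Measure.restrict_apply (hC.measurableSet.preimage hmeas),
      Measure.restrict_apply hC.measurableSet]
    exact hμ.measure_preimage_mul_left_inter hK hg hC
  exact ext_of_generate_finite _ (BorelSpace.measurable_eq.trans borel_eq_generateFrom_isClosed)
    isPiSystem_isClosed hclosed (hclosed univ isClosed_univ)

theorem map_restrict_le (hμ : IsQuasiLeftInvariant μ) {F : Set G} (hF : IsCompact F) (g : G) :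
    (μ.restrict F).map (g * ·) ≤ μ.restrict ((g * ·) '' F) := by
  by_cases hg : g ∈ F
  · exact (hμ.map_restrict_eq hF hg).le
  have hmeas : Measurable (g * ·) := (continuous_const_mul g).measurable
  -- Compare on `insert g F`, then cancel the atom that `g` contributes over `g * g`.
  have hatom : (μ.restrict {g}).map (g * ·) = μ.restrict {g * g} := by
    rw [Measure.restrict_singleton, Measure.restrict_singleton, Measure.map_smul,
      Measure.map_dirac' hmeas, hμ.measure_singleton_mul_self]
  have key : (μ.restrict F).map (g * ·) + μ.restrict {g * g}
      ≤ μ.restrict ((g * ·) '' F) + μ.restrict {g * g} :=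
    calc (μ.restrict F).map (g * ·) + μ.restrict {g * g}
        = (μ.restrict (insert g F)).map (g * ·) := by
          rw [insert_eq, union_comm, Measure.restrict_union (disjoint_singleton_right.2 hg)
            (measurableSet_singleton g), Measure.map_add _ _ hmeas, hatom]
      _ = μ.restrict ((g * ·) '' insert g F) := hμ.map_restrict_eq (hF.insert g) (mem_insert g F)
      _ ≤ μ.restrict ((g * ·) '' F) + μ.restrict {g * g} := by
          rw [image_insert_eq, insert_eq, union_comm]
          exact Measure.restrict_union_le _ _
  refine Measure.le_iff.2 fun A hA => ?_
  have : IsFiniteMeasure (μ.restrict {g * g}) :=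
    isFiniteMeasure_restrict.2 isCompact_singleton.measure_lt_top.ne
  have hfin : μ.restrict {g * g} A ≠ ⊤ := measure_ne_top _ _
  simpa only [Measure.add_apply, ENNReal.add_le_add_iff_right hfin] using Measure.le_iff.1 key A hA

theorem abs_setIntegral_mul_left_sub_le (hμ : IsQuasiLeftInvariant μ) {F : Set G}
    (hF : IsCompact F) (g : G) (f : G →ᵇ ℝ) :
    |∫ t in F, f (g * t) ∂μ - ∫ t in F, f t ∂μ|
      ≤ 2 * ‖f‖ * μ.real (symmDiff F ((g * ·) '' F)) := by
  have hgF : IsCompact ((g * ·) '' F) := hF.image (continuous_const_mul g)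
  set ρ := μ.restrict (F ∪ (g * ·) '' F)
  have : IsFiniteMeasure ρ := isFiniteMeasure_restrict.2 (hF.union hgF).measure_lt_top.ne
  have hmeas : Measurable (g * ·) := (continuous_const_mul g).measurable
  have hf : ∀ t, |f t| ≤ ‖f‖ := f.norm_coe_le_norm
  have htrans : ∫ t in F, f (g * t) ∂μ = ∫ t, f t ∂(μ.restrict F).map (g * ·) :=
    (integral_map hmeas.aemeasurable f.continuous.aestronglyMeasurable).symm
  have hmap := abs_integral_sub_integral_le_of_le
    ((hμ.map_restrict_le hF g).trans (Measure.restrict_mono subset_union_right le_rfl))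
    (f.integrable ρ) hf
  have hrestrict := abs_integral_sub_integral_le_of_le
    (Measure.restrict_mono subset_union_left le_rfl) (f.integrable ρ) hf
  rw [Measure.map_apply hmeas MeasurableSet.univ, preimage_univ] at hmap
  have hmass : (ρ univ - μ.restrict F univ).toReal ≤ μ.real (symmDiff F ((g * ·) '' F)) := by
    rw [Measure.restrict_apply_univ, Measure.restrict_apply_univ]
    refine ENNReal.toReal_mono ?_ (le_measure_sdiff.trans (measure_mono ?_))
    · exact ((measure_mono symmDiff_subset_union).trans_lt (hF.union hgF).measure_lt_top).ne
    · rw [union_sdiff_left]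
      exact subset_union_right
  calc |∫ t in F, f (g * t) ∂μ - ∫ t in F, f t ∂μ|
      = |(∫ t, f t ∂ρ - ∫ t in F, f t ∂μ) - (∫ t, f t ∂ρ - ∫ t in F, f (g * t) ∂μ)| := by
        ring_nf
    _ ≤ |∫ t, f t ∂ρ - ∫ t in F, f t ∂μ| + |∫ t, f t ∂ρ - ∫ t in F, f (g * t) ∂μ| :=
        abs_sub _ _
    _ ≤ ‖f‖ * μ.real (symmDiff F ((g * ·) '' F)) + ‖f‖ * μ.real (symmDiff F ((g * ·) '' F)) := by
        rw [htrans]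
        gcongr
        · exact hrestrict.trans (mul_le_mul_of_nonneg_left hmass (norm_nonneg f))
        · exact hmap.trans (mul_le_mul_of_nonneg_left hmass (norm_nonneg f))
    _ = 2 * ‖f‖ * μ.real (symmDiff F ((g * ·) '' F)) := by ring

theorem isAsymptoticallyInvariant_cond (hμ : IsQuasiLeftInvariant μ) {F : ℕ → Set G}
    (hF : ∀ n, IsCompact (F n))
    (hFolner : ∀ g : G, Tendsto (fun n => μ (symmDiff (F n) ((g * ·) '' F n)) / μ (F n))
      atTop (𝓝 0)) :
    IsAsymptoticallyInvariant fun n => μ[|F n] := by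
  intro f g
  have hlim : Tendsto (fun n => 2 * ‖f‖ * (μ (symmDiff (F n) ((g * ·) '' F n)) / μ (F n)).toReal)
      atTop (𝓝 0) := by
    simpa using ((ENNReal.tendsto_toReal ENNReal.zero_ne_top).comp (hFolner g)).const_mul (2 * ‖f‖)
  refine squeeze_zero_norm (fun n => ?_) hlim
  rw [integral_cond_eq_inv_mul_setIntegral, integral_cond_eq_inv_mul_setIntegral, ← mul_sub,
    norm_mul, Real.norm_eq_abs, Real.norm_eq_abs, abs_inv, abs_of_nonneg measureReal_nonneg,
    ENNReal.toReal_div, mul_div_assoc', div_eq_inv_mul]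
  exact mul_le_mul_of_nonneg_left (hμ.abs_setIntegral_mul_left_sub_le (hF n) g f)
    (inv_nonneg.2 measureReal_nonneg)

end IsQuasiLeftInvariant

section AlmostPeriodic

variable {G X : Type*} [Monoid G] [MetricSpace X] [MulAction G X] {y : X}

theorem dist_smul_mul_smul_le_of_dense_orbit [ContinuousConstSMul G X]
    (hdense : Dense (orbit G y)) {ε : ℝ} {τ : G}
    (hτ : ∀ g : G, dist (g • y) ((τ * g) • y) < ε) (z : X) (g : G) :
    dist (g • z) ((τ * g) • z) ≤ ε := by
  have hclosed : IsClosed {z : X | ∀ g : G, dist (g • z) ((τ * g) • z) ≤ ε} := by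
    simp only [ofPred_forall]
    exact isClosed_iInter fun g =>
      isClosed_le ((continuous_const_smul g).dist (continuous_const_smul (τ * g))) continuous_const
  have horbit : orbit G y ⊆ {z : X | ∀ g : G, dist (g • z) ((τ * g) • z) ≤ ε} := by
    rintro _ ⟨h, rfl⟩ g
    simpa only [smul_smul, mul_assoc] using (hτ (g * h)).le
  exact hclosed.closure_subset_iff.2 horbit (hdense z) g

theorem IsBohrAlmostPeriodicPt.equicontinuous_smul [TopologicalSpace G] [ContinuousSMul G X]
    (hy : IsBohrAlmostPeriodicPt (G := G) y) (hdense : Dense (orbit G y)) :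
    Equicontinuous fun g : G => (g • · : X → X) := by
  intro z₀
  rw [Metric.equicontinuousAt_iff_right]
  intro ε hε
  obtain ⟨L, hL, hPL⟩ := hy (ε / 4) (by positivity)
  obtain ⟨V, hV, hVL⟩ := hL.mem_uniformity_of_prod (f := fun z (l : G) => l • z)
    (continuous_smul.comp continuous_swap).continuousOn (mem_univ z₀)
    (Metric.dist_mem_uniformity (by positivity : 0 < ε / 4))
  rw [nhdsWithin_univ] at hV
  filter_upwards [hV] with z hz g
  obtain ⟨τ, hτ, l, hl, rfl⟩ : g ∈ {τ : G | ∀ g : G, dist (g • y) ((τ * g) • y) < ε / 4} * L :=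
    hPL ▸ mem_univ g
  calc dist ((τ * l) • z₀) ((τ * l) • z)
      ≤ dist ((τ * l) • z₀) (l • z₀) + dist (l • z₀) (l • z) + dist (l • z) ((τ * l) • z) :=
        dist_triangle4 _ _ _ _
    _ ≤ ε / 4 + ε / 4 + ε / 4 := by
        gcongr
        · rw [dist_comm]; exact dist_smul_mul_smul_le_of_dense_orbit hdense hτ z₀ l
        · rw [dist_comm]; exact (hVL z hz l hl).le
        · exact dist_smul_mul_smul_le_of_dense_orbit hdense hτ z l
    _ < ε := by linarith

end AlmostPeriodic

theorem IsBohrAlmostPeriodicPt.tendsto_integral_smul {G X : Type*} [CommMonoid G]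
    [TopologicalSpace G] [MeasurableSpace G] [OpensMeasurableSpace G] [MetricSpace X]
    [CompactSpace X] [MeasurableSpace X] [BorelSpace X] [MulAction G X] [ContinuousSMul G X]
    {y : X} (hy : IsBohrAlmostPeriodicPt (G := G) y) (hdense : Dense (orbit G y))
    {μ : Measure X} [IsProbabilityMeasure μ] (hinv : ∀ g : G, μ.map (g • ·) = μ)
    {ν : ℕ → Measure G} [∀ n, IsProbabilityMeasure (ν n)] (hν : IsAsymptoticallyInvariant ν)
    (φ : C(X, ℝ)) (x : X) :
    Tendsto (fun n => ∫ t, φ (t • x) ∂ν n) atTop (𝓝 (∫ z, φ z ∂μ)) := by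
  set A : ℕ → X → ℝ := fun n z => ∫ t, φ (t • z) ∂ν n
  let φ_orbit (z : X) : G →ᵇ ℝ := (BoundedContinuousFunction.mkOfCompact φ).compContinuous
    ⟨fun t => t • z, continuous_id.smul continuous_const⟩
  have hφ : UniformContinuous φ := CompactSpace.uniformContinuous_of_continuous φ.continuous
  have hA : Equicontinuous A :=
    Equicontinuous.integral (fun z U hU => hy.equicontinuous_smul hdense z _ (hφ hU)) ν
      fun n z => (φ_orbit z).integrable (ν n)
  have hA_orbit : ∀ g : G, Tendsto (fun n => A n (g • y) - A n y) atTop (𝓝 0) := fun g => by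
    simpa [A, φ_orbit, smul_smul, mul_comm] using hν (φ_orbit y) g
  have hA_sub : Equicontinuous fun n z => A n z - A n y := fun z₀ => by
    rw [Metric.equicontinuousAt_iff_right]
    simpa only [dist_sub_right] using Metric.equicontinuousAt_iff_right.1 (hA z₀)
  have hA_all : ∀ z, Tendsto (fun n => A n z - A n y) atTop (𝓝 0) := fun z =>
    (hA_sub z).tendsto_of_mem_closure (f := fun _ => 0) tendsto_const_nhds
      (by rintro _ ⟨g, rfl⟩; exact hA_orbit g) (hdense z)
  refine tendsto_of_integral_eq_of_tendsto_sub μ (C := ‖φ‖)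
    (fun n => (hA.continuous n).aestronglyMeasurable) (fun n z => ?_)
    (fun n => integral_integral_smul_eq hinv (ν n) φ)
    (fun z => by simpa using (hA_all x).sub (hA_all z))
  calc |A n z| ≤ ‖φ‖ * (ν n).real univ :=
        norm_integral_le_of_norm_le_const (Eventually.of_forall fun t => φ.norm_coe_le_norm _)
    _ = ‖φ‖ := by simp

theorem bohr_pointwise_convergence_general
    {G X : Type*} [CommMonoid G] [TopologicalSpace G] [ContinuousMul G]
    [T2Space G]
    [MeasurableSpace G] [BorelSpace G]
    [MetricSpace X] [CompactSpace X] [MulAction G X] [ContinuousSMul G X]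
    [MeasurableSpace X] [BorelSpace X]
    (lamG : Measure G) [IsFiniteMeasureOnCompacts lamG]
    -- `lamG` is a quasi-Haar (Radon) measure: positive on some compact set,
    -- and invariant on translates of compact sets by their own elements
    (hquasi : ∀ K : Set G, IsCompact K → ∀ g ∈ K,
      lamG ((fun t => g * t) '' K) = lamG K)
    (y : X) (hy : IsBohrAlmostPeriodicPt (G := G) y)
    (hdense : closure (MulAction.orbit G y) = Set.univ)
    (μ : Measure X) [IsProbabilityMeasure μ]
    (hinv : ∀ g : G, Measure.map (fun x => g • x) μ = μ)
    (F : ℕ → Set G) (hFcomp : ∀ n, IsCompact (F n))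
    (hFpos : ∀ n, 0 < lamG (F n))
    (hFolner : ∀ g : G, Tendsto
      (fun n => lamG (symmDiff (F n) ((fun t => g * t) '' (F n))) / lamG (F n))
      atTop (𝓝 0)) :
    ∀ φ : C(X, ℝ), ∀ x : X, Tendsto
      (fun n => (lamG (F n)).toReal⁻¹ * ∫ g in F n, φ (g • x) ∂lamG)
      atTop (𝓝 (∫ z, φ z ∂μ)) := by
  intro φ x
  have : ∀ n, IsProbabilityMeasure (lamG[|F n]) := fun n =>
    cond_isProbabilityMeasure_of_finite (hFpos n).ne' (hFcomp n).measure_lt_top.ne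
  simpa only [integral_cond_eq_inv_mul_setIntegral, measureReal_def] using
    hy.tendsto_integral_smul (dense_iff_closure_eq.2 hdense) hinv
      (IsQuasiLeftInvariant.isAsymptoticallyInvariant_cond hquasi hFcomp hFolner) φ x

/-- Bohr's pointwise convergence theorem: Følner averages of a continuous
function along a Bohr almost periodic action converge to the space average. -/
theorem bohr_pointwise_convergence
    {G X : Type*} [CommMonoid G] [TopologicalSpace G] [ContinuousMul G]
    [LocallyCompactSpace G] [SecondCountableTopology G] [T2Space G]
    [MeasurableSpace G] [BorelSpace G]
    [MetricSpace X] [CompactSpace X] [MulAction G X] [ContinuousSMul G X]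
    [MeasurableSpace X] [BorelSpace X]
    (lamG : Measure G) [IsFiniteMeasureOnCompacts lamG]
    -- `lamG` is a quasi-Haar (Radon) measure: positive on some compact set,
    -- and invariant on translates of compact sets by their own elements
    (hradon : ∃ K : Set G, IsCompact K ∧ 0 < lamG K)
    (hquasi : ∀ K : Set G, IsCompact K → ∀ g ∈ K,
      lamG ((fun t => g * t) '' K) = lamG K)
    (y : X) (hy : IsBohrAlmostPeriodicPt (G := G) y)
    (hdense : closure (MulAction.orbit G y) = Set.univ)
    (μ : Measure X) [IsProbabilityMeasure μ]
    (hinv : ∀ g : G, Measure.map (fun x => g • x) μ = μ)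
    (huniq : ∀ ν : Measure X, IsProbabilityMeasure ν →
      (∀ g : G, Measure.map (fun x => g • x) ν = ν) → ν = μ)
    (F : ℕ → Set G) (hFcomp : ∀ n, IsCompact (F n))
    (hFpos : ∀ n, 0 < lamG (F n))
    (hFolner : ∀ g : G, Tendsto
      (fun n => lamG (symmDiff (F n) ((fun t => g * t) '' (F n))) / lamG (F n))
      atTop (𝓝 0)) :
    ∀ φ : C(X, ℝ), ∀ x : X, Tendsto
      (fun n => (lamG (F n)).toReal⁻¹ * ∫ g in F n, φ (g • x) ∂lamG)
      atTop (𝓝 (∫ z, φ z ∂μ)) :=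
  bohr_pointwise_convergence_general lamG hquasi y hy hdense μ hinv F hFcomp hFpos hFolner
end

section
/- Let $G$ be a topological abelian group acting continuously on a compact metric space $X$, and let $y \in X$ be a Bohr almost periodic point. Then $\mathrm{cls}_X G(y)$, equipped with the induced operation $\diamond$ satisfying $g(y) \diamond h(y) = (gh)(y)$, is a compact abelian topological group (in particular every element has an inverse and inversion is continuous). -/
/-!
Write `h = τ * l` with `τ` an `ε`-almost period and `l` in the compact set `L`. Since `τ` moves
every orbit point by less than `ε` and the translations by elements of `L` are uniformly
equicontinuous on the compact space `X`, all translations `h • ·` are uniformly equicontinuous on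
the orbit of `y`. As `G` is commutative, `(g • y, h • y) ↦ (g * h) • y` and `g • y ↦ g⁻¹ • y` are
then well defined and uniformly continuous on the orbit, so they extend continuously to its compact
closure, where the group laws follow from those on the dense orbit.
-/

open MulAction Set Pointwise

open Filter Topology

theorem Metric.uniformEquicontinuousOn_iff {ι α β : Type*} [PseudoMetricSpace α]
    [PseudoMetricSpace β] {F : ι → β → α} {S : Set β} :
    UniformEquicontinuousOn F S ↔
      ∀ ε > 0, ∃ δ > 0, ∀ x ∈ S, ∀ y ∈ S, dist x y < δ → ∀ i, dist (F i x) (F i y) < ε := by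
  rw [(uniformity_basis_dist.inf_principal (S ×ˢ S)).uniformEquicontinuousOn_iff
    uniformity_basis_dist]
  simp only [mem_inter_iff, mem_ofPred_eq, mem_prod]
  grind

theorem IsCompact.uniformEquicontinuous_smul {M X : Type*} [TopologicalSpace M] [UniformSpace X]
    [CompactSpace X] [SMul M X] [ContinuousSMul M X] {L : Set M} (hL : IsCompact L) :
    UniformEquicontinuous fun l : L => ((l : M) • · : X → X) := by
  refine CompactSpace.uniformEquicontinuous_of_equicontinuous fun x U hU => ?_
  obtain ⟨V, hV, hVU⟩ := hL.mem_uniformity_of_prod (f := fun (x : X) (l : M) => l • x)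
    (s := univ) (continuous_snd.smul continuous_fst).continuousOn (mem_univ x)
    (symm_le_uniformity hU)
  rw [nhdsWithin_univ] at hV
  exact Filter.mem_of_superset hV fun x' hx' l => hVU x' hx' l l.2

theorem UniformContinuousOn.exists_tendsto_nhdsWithin {α β : Type*} [UniformSpace α]
    [UniformSpace β] [CompleteSpace β] {f : α → β} {s : Set α} (hf : UniformContinuousOn f s)
    {x : α} (hx : x ∈ closure s) : ∃ b, Tendsto f (𝓝[s] x) (𝓝 b) :=
  haveI := mem_closure_iff_nhdsWithin_neBot.1 hx
  CompleteSpace.complete ((cauchy_nhds.mono nhdsWithin_le_nhds).map_of_le hf inf_le_right)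

section
variable {α β : Type*} [UniformSpace α] [UniformSpace β] [CompleteSpace β] {f : α → β}
  {s : Set α}

theorem UniformContinuousOn.continuousOn_extendFrom (hf : UniformContinuousOn f s) :
    ContinuousOn (extendFrom s f) (closure s) :=
  _root_.continuousOn_extendFrom subset_rfl fun _ hx => hf.exists_tendsto_nhdsWithin hx

theorem UniformContinuousOn.mapsTo_extendFrom (hf : UniformContinuousOn f s) {t : Set β}
    (hst : MapsTo f s t) : MapsTo (extendFrom s f) (closure s) (closure t) := fun _ hx =>
  haveI := mem_closure_iff_nhdsWithin_neBot.1 hx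
  mem_closure_of_tendsto (tendsto_extendFrom (hf.exists_tendsto_nhdsWithin hx))
    (eventually_mem_nhdsWithin.mono hst)
end

theorem IsBohrAlmostPeriodicPt.uniformEquicontinuousOn_orbit {G X : Type*} [Monoid G]
    [TopologicalSpace G] [MetricSpace X] [CompactSpace X] [MulAction G X] [ContinuousSMul G X]
    {y : X} (hy : IsBohrAlmostPeriodicPt (G := G) y) :
    UniformEquicontinuousOn (fun g : G => (g • · : X → X)) (orbit G y) := by
  rw [Metric.uniformEquicontinuousOn_iff]
  intro ε hε
  obtain ⟨L, hL, hcover⟩ := hy (ε / 3) (by positivity)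
  obtain ⟨δ, hδ, hLδ⟩ :=
    Metric.uniformEquicontinuous_iff.1 (hL.uniformEquicontinuous_smul (X := X)) (ε / 3)
      (by positivity)
  have hmove : ∀ τ ∈ {τ : G | ∀ g : G, dist (g • y) ((τ * g) • y) < ε / 3},
      ∀ b ∈ orbit G y, dist (τ • b) b < ε / 3 := by
    rintro τ hτ _ ⟨g, rfl⟩
    simpa [dist_comm, mul_smul] using hτ g
  have hmem : ∀ l : G, ∀ b ∈ orbit G y, l • b ∈ orbit G y := by
    rintro l _ ⟨g, rfl⟩
    exact ⟨l * g, mul_smul l g y⟩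
  refine ⟨δ, hδ, fun a ha b hb hab h => ?_⟩
  obtain ⟨τ, hτ, l, hl, rfl⟩ : h ∈ _ * L := hcover ▸ mem_univ h
  have hτa := hmove τ hτ _ (hmem l a ha)
  have hτb := hmove τ hτ _ (hmem l b hb)
  have hlab := hLδ a b hab ⟨l, hl⟩
  simp only [mul_smul]
  calc dist (τ • l • a) (τ • l • b)
      ≤ dist (τ • l • a) (l • a) + dist (l • a) (l • b) + dist (l • b) (τ • l • b) :=
        dist_triangle4 _ _ _ _
    _ < ε / 3 + ε / 3 + ε / 3 := by rw [dist_comm (l • b)]; gcongr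
    _ = ε := by ring

section OrbitRep
variable {G X : Type*}

variable (G) in
noncomputable def orbitRep [Monoid G] [MulAction G X] (y a : X) : G :=
  Function.invFun (· • y : G → X) a

theorem orbitRep_smul [Monoid G] [MulAction G X] {y a : X} (ha : a ∈ orbit G y) :
    orbitRep G y a • y = a :=
  Function.invFun_eq ha

theorem orbitRep_smul_comm [CommMonoid G] [MulAction G X] {y a b : X}
    (ha : a ∈ orbit G y) (hb : b ∈ orbit G y) : orbitRep G y a • b = orbitRep G y b • a := by
  conv_lhs => rw [← orbitRep_smul hb]
  conv_rhs => rw [← orbitRep_smul ha]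
  exact smul_comm _ _ _

theorem inv_orbitRep_smul_eq [Group G] [MulAction G X] {y a b : X}
    (hb : b ∈ orbit G y) :
    (orbitRep G y a)⁻¹ • y = ((orbitRep G y a)⁻¹ * (orbitRep G y b)⁻¹) • b := by
  have hcancel : (orbitRep G y b)⁻¹ • b = y := by rw [inv_smul_eq_iff, orbitRep_smul hb]
  rw [mul_smul, hcancel]

end OrbitRep

section OrbitMul
variable {G X : Type*} [CommMonoid G] [TopologicalSpace G] [MetricSpace X] [CompactSpace X]
  [MulAction G X] [ContinuousSMul G X] {y : X}

variable (G) in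
/-- The operation `⋄` on the orbit closure. -/
noncomputable def orbitMul (y x z : X) : X :=
  extendFrom (orbit G y ×ˢ orbit G y) (fun p => orbitRep G y p.1 • p.2) (x, z)

theorem IsBohrAlmostPeriodicPt.uniformContinuousOn_orbitRep_smul
    (hy : IsBohrAlmostPeriodicPt (G := G) y) :
    UniformContinuousOn (fun p : X × X => orbitRep G y p.1 • p.2) (orbit G y ×ˢ orbit G y) := by
  rw [Metric.uniformContinuousOn_iff]
  intro ε hε
  obtain ⟨δ, hδ, hequi⟩ := Metric.uniformEquicontinuousOn_iff.1 hy.uniformEquicontinuousOn_orbit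
    (ε / 2) (by positivity)
  refine ⟨δ, hδ, fun p ⟨hp₁, hp₂⟩ q ⟨hq₁, hq₂⟩ hpq => ?_⟩
  rw [Prod.dist_eq, max_lt_iff] at hpq
  calc dist (orbitRep G y p.1 • p.2) (orbitRep G y q.1 • q.2)
      ≤ dist (orbitRep G y p.1 • p.2) (orbitRep G y p.1 • q.2)
        + dist (orbitRep G y q.2 • p.1) (orbitRep G y q.2 • q.1) := by
        rw [← orbitRep_smul_comm hp₁ hq₂, ← orbitRep_smul_comm hq₁ hq₂]
        exact dist_triangle _ _ _
    _ < ε / 2 + ε / 2 := add_lt_add (hequi _ hp₂ _ hq₂ hpq.2 _) (hequi _ hp₁ _ hq₁ hpq.1 _)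
    _ = ε := add_halves ε

theorem IsBohrAlmostPeriodicPt.orbitMul_smul_smul (hy : IsBohrAlmostPeriodicPt (G := G) y)
    (g h : G) : orbitMul G y (g • y) (h • y) = (g * h) • y := by
  have hmem : (g • y, h • y) ∈ orbit G y ×ˢ orbit G y := ⟨mem_orbit y g, mem_orbit y h⟩
  rw [orbitMul, extendFrom_extends hy.uniformContinuousOn_orbitRep_smul.continuousOn _ hmem,
    smul_comm, orbitRep_smul hmem.1, smul_smul, mul_comm]

theorem IsBohrAlmostPeriodicPt.continuousOn_orbitMul (hy : IsBohrAlmostPeriodicPt (G := G) y) :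
    ContinuousOn (fun p : X × X => orbitMul G y p.1 p.2)
      (closure (orbit G y) ×ˢ closure (orbit G y)) := by
  rw [← closure_prod_eq]
  exact hy.uniformContinuousOn_orbitRep_smul.continuousOn_extendFrom

theorem IsBohrAlmostPeriodicPt.orbitMul_mem (hy : IsBohrAlmostPeriodicPt (G := G) y) {x z : X}
    (hx : x ∈ closure (orbit G y)) (hz : z ∈ closure (orbit G y)) :
    orbitMul G y x z ∈ closure (orbit G y) := by
  have hmaps : MapsTo (fun p : X × X => orbitRep G y p.1 • p.2) (orbit G y ×ˢ orbit G y)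
      (orbit G y) := by
    rintro ⟨a, _⟩ ⟨-, h, rfl⟩
    exact ⟨orbitRep G y a * h, mul_smul _ _ _⟩
  exact hy.uniformContinuousOn_orbitRep_smul.mapsTo_extendFrom hmaps
    (by rw [closure_prod_eq]; exact ⟨hx, hz⟩)

theorem IsBohrAlmostPeriodicPt.continuousOn_orbitMul_comp
    (hy : IsBohrAlmostPeriodicPt (G := G) y) {α : Type*} [TopologicalSpace α] {f g : α → X}
    {s : Set α} (hf : ContinuousOn f s) (hg : ContinuousOn g s)
    (hfs : MapsTo f s (closure (orbit G y))) (hgs : MapsTo g s (closure (orbit G y))) :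
    ContinuousOn (fun a => orbitMul G y (f a) (g a)) s :=
  hy.continuousOn_orbitMul.comp (f := fun a => (f a, g a)) (hf.prodMk hg)
    fun _ ha => ⟨hfs ha, hgs ha⟩

theorem IsBohrAlmostPeriodicPt.orbitMul_comm (hy : IsBohrAlmostPeriodicPt (G := G) y) {x z : X}
    (hx : x ∈ closure (orbit G y)) (hz : z ∈ closure (orbit G y)) :
    orbitMul G y x z = orbitMul G y z x := by
  have hdense : EqOn (fun p : X × X => orbitMul G y p.1 p.2) (fun p => orbitMul G y p.2 p.1)
      (orbit G y ×ˢ orbit G y) := by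
    rintro ⟨_, _⟩ ⟨⟨g, rfl⟩, ⟨h, rfl⟩⟩
    simp only [hy.orbitMul_smul_smul, mul_comm g h]
  exact hdense.of_subset_closure hy.continuousOn_orbitMul
    (hy.continuousOn_orbitMul_comp continuousOn_snd continuousOn_fst (fun _ hp => hp.2)
      (fun _ hp => hp.1))
    (prod_mono subset_closure subset_closure) closure_prod_eq.ge (mk_mem_prod hx hz)

theorem IsBohrAlmostPeriodicPt.orbitMul_assoc (hy : IsBohrAlmostPeriodicPt (G := G) y)
    {x z w : X} (hx : x ∈ closure (orbit G y)) (hz : z ∈ closure (orbit G y))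
    (hw : w ∈ closure (orbit G y)) :
    orbitMul G y (orbitMul G y x z) w = orbitMul G y x (orbitMul G y z w) := by
  have hdense : EqOn (fun q : X × X × X => orbitMul G y (orbitMul G y q.1 q.2.1) q.2.2)
      (fun q => orbitMul G y q.1 (orbitMul G y q.2.1 q.2.2))
      (orbit G y ×ˢ orbit G y ×ˢ orbit G y) := by
    rintro ⟨_, _, _⟩ ⟨⟨g, rfl⟩, ⟨h, rfl⟩, ⟨k, rfl⟩⟩
    simp only [hy.orbitMul_smul_smul, mul_assoc]
  set K := closure (orbit G y)
  have h₁ : ContinuousOn (fun q : X × X × X => q.1) (K ×ˢ K ×ˢ K) := continuousOn_fst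
  have h₂ : ContinuousOn (fun q : X × X × X => q.2.1) (K ×ˢ K ×ˢ K) :=
    continuous_snd.fst.continuousOn
  have h₃ : ContinuousOn (fun q : X × X × X => q.2.2) (K ×ˢ K ×ˢ K) :=
    continuous_snd.snd.continuousOn
  have hK₁ : MapsTo (fun q : X × X × X => q.1) (K ×ˢ K ×ˢ K) K := fun _ hq => hq.1
  have hK₂ : MapsTo (fun q : X × X × X => q.2.1) (K ×ˢ K ×ˢ K) K := fun _ hq => hq.2.1
  have hK₃ : MapsTo (fun q : X × X × X => q.2.2) (K ×ˢ K ×ˢ K) K := fun _ hq => hq.2.2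
  have hcl : K ×ˢ K ×ˢ K ⊆ closure (orbit G y ×ˢ orbit G y ×ˢ orbit G y) := by
    rw [closure_prod_eq, closure_prod_eq]
  have key := hdense.of_subset_closure
    (hy.continuousOn_orbitMul_comp (hy.continuousOn_orbitMul_comp h₁ h₂ hK₁ hK₂) h₃
      (fun _ hq => hy.orbitMul_mem (hK₁ hq) (hK₂ hq)) hK₃)
    (hy.continuousOn_orbitMul_comp h₁ (hy.continuousOn_orbitMul_comp h₂ h₃ hK₂ hK₃) hK₁
      (fun _ hq => hy.orbitMul_mem (hK₂ hq) (hK₃ hq)))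
    (prod_mono subset_closure (prod_mono subset_closure subset_closure)) hcl
  simpa only using key (mk_mem_prod hx (mk_mem_prod hz hw))

theorem IsBohrAlmostPeriodicPt.base_orbitMul (hy : IsBohrAlmostPeriodicPt (G := G) y) {x : X}
    (hx : x ∈ closure (orbit G y)) : orbitMul G y y x = x := by
  have hdense : EqOn (orbitMul G y y) id (orbit G y) := by
    rintro _ ⟨g, rfl⟩
    simpa only [one_smul, one_mul, id_eq] using hy.orbitMul_smul_smul 1 g
  exact hdense.of_subset_closure
    (hy.continuousOn_orbitMul_comp continuousOn_const continuousOn_id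
      (fun _ _ => subset_closure (mem_orbit_self y)) fun _ hx => hx)
    continuousOn_id subset_closure subset_rfl hx

end OrbitMul

section OrbitInv
variable {G X : Type*} [CommGroup G] [TopologicalSpace G] [MetricSpace X] [CompactSpace X]
  [MulAction G X] [ContinuousSMul G X] {y : X}

variable (G) in
noncomputable def orbitInv (y : X) : X → X :=
  extendFrom (orbit G y) fun a => (orbitRep G y a)⁻¹ • y

theorem IsBohrAlmostPeriodicPt.uniformContinuousOn_inv_orbitRep_smul
    (hy : IsBohrAlmostPeriodicPt (G := G) y) :
    UniformContinuousOn (fun a => (orbitRep G y a)⁻¹ • y) (orbit G y) := by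
  rw [Metric.uniformContinuousOn_iff]
  intro ε hε
  obtain ⟨δ, hδ, hequi⟩ :=
    Metric.uniformEquicontinuousOn_iff.1 hy.uniformEquicontinuousOn_orbit ε hε
  refine ⟨δ, hδ, fun a ha b hb hab => ?_⟩
  rw [inv_orbitRep_smul_eq (a := a) hb, inv_orbitRep_smul_eq (a := b) ha,
    mul_comm (orbitRep G y b)⁻¹, dist_comm]
  exact hequi a ha b hb hab _

theorem IsBohrAlmostPeriodicPt.orbitInv_eq (hy : IsBohrAlmostPeriodicPt (G := G) y) {a : X}
    (ha : a ∈ orbit G y) : orbitInv G y a = (orbitRep G y a)⁻¹ • y :=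
  extendFrom_extends hy.uniformContinuousOn_inv_orbitRep_smul.continuousOn a ha

theorem IsBohrAlmostPeriodicPt.continuousOn_orbitInv (hy : IsBohrAlmostPeriodicPt (G := G) y) :
    ContinuousOn (orbitInv G y) (closure (orbit G y)) :=
  hy.uniformContinuousOn_inv_orbitRep_smul.continuousOn_extendFrom

theorem IsBohrAlmostPeriodicPt.orbitInv_mem (hy : IsBohrAlmostPeriodicPt (G := G) y) {x : X}
    (hx : x ∈ closure (orbit G y)) : orbitInv G y x ∈ closure (orbit G y) :=
  hy.uniformContinuousOn_inv_orbitRep_smul.mapsTo_extendFrom (fun _ _ => mem_orbit y _) hx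

theorem IsBohrAlmostPeriodicPt.orbitMul_orbitInv (hy : IsBohrAlmostPeriodicPt (G := G) y)
    {x : X} (hx : x ∈ closure (orbit G y)) : orbitMul G y x (orbitInv G y x) = y := by
  have hdense : EqOn (fun a => orbitMul G y a (orbitInv G y a)) (fun _ => y) (orbit G y) := by
    intro a ha
    have h := hy.orbitMul_smul_smul (orbitRep G y a) (orbitRep G y a)⁻¹
    rwa [orbitRep_smul ha, mul_inv_cancel, one_smul, ← hy.orbitInv_eq ha] at h
  exact hdense.of_subset_closure
    (hy.continuousOn_orbitMul_comp continuousOn_id hy.continuousOn_orbitInv (fun _ hx => hx)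
      fun _ hx => hy.orbitInv_mem hx)
    continuousOn_const subset_closure subset_rfl hx

end OrbitInv

theorem orbit_closure_compact_abelian_group_general
    {G X : Type*} [CommGroup G] [TopologicalSpace G]
    [MetricSpace X] [CompactSpace X] [MulAction G X] [ContinuousSMul G X]
    (y : X) (hy : IsBohrAlmostPeriodicPt (G := G) y) :
    ∃ op : X → X → X,
      ContinuousOn (fun p : X × X => op p.1 p.2)
        ((closure (MulAction.orbit G y)) ×ˢ (closure (MulAction.orbit G y))) ∧
      (∀ x ∈ closure (MulAction.orbit G y), ∀ z ∈ closure (MulAction.orbit G y),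
        op x z ∈ closure (MulAction.orbit G y)) ∧
      (∀ x ∈ closure (MulAction.orbit G y), ∀ z ∈ closure (MulAction.orbit G y),
        op x z = op z x) ∧
      (∀ x ∈ closure (MulAction.orbit G y), ∀ z ∈ closure (MulAction.orbit G y),
        ∀ w ∈ closure (MulAction.orbit G y), op (op x z) w = op x (op z w)) ∧
      (∀ g h : G, op (g • y) (h • y) = (g * h) • y) ∧
      (∀ x ∈ closure (MulAction.orbit G y), op y x = x ∧ op x y = x) ∧
      ∃ inv : X → X, ContinuousOn inv (closure (MulAction.orbit G y)) ∧
        ∀ x ∈ closure (MulAction.orbit G y),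
          inv x ∈ closure (MulAction.orbit G y) ∧ op x (inv x) = y := by
  have hyK : y ∈ closure (orbit G y) := subset_closure (mem_orbit_self y)
  refine ⟨orbitMul G y, hy.continuousOn_orbitMul, fun x hx z hz => hy.orbitMul_mem hx hz,
    fun x hx z hz => hy.orbitMul_comm hx hz, fun x hx z hz w hw => hy.orbitMul_assoc hx hz hw,
    hy.orbitMul_smul_smul, fun x hx => ⟨hy.base_orbitMul hx, ?_⟩, orbitInv G y,
    hy.continuousOn_orbitInv, fun x hx => ⟨hy.orbitInv_mem hx, hy.orbitMul_orbitInv hx⟩⟩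
  rw [hy.orbitMul_comm hx hyK, hy.base_orbitMul hx]

/-- For a topological abelian *group* action, the orbit closure of a Bohr
almost periodic point with the induced operation `⋄` is a compact abelian
topological group: in particular every element has an inverse and inversion is
continuous. -/
theorem orbit_closure_compact_abelian_group
    {G X : Type*} [CommGroup G] [TopologicalSpace G] [IsTopologicalGroup G]
    [MetricSpace X] [CompactSpace X] [MulAction G X] [ContinuousSMul G X]
    (y : X) (hy : IsBohrAlmostPeriodicPt (G := G) y) :
    ∃ op : X → X → X,
      ContinuousOn (fun p : X × X => op p.1 p.2)
        ((closure (MulAction.orbit G y)) ×ˢ (closure (MulAction.orbit G y))) ∧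
      (∀ x ∈ closure (MulAction.orbit G y), ∀ z ∈ closure (MulAction.orbit G y),
        op x z ∈ closure (MulAction.orbit G y)) ∧
      (∀ x ∈ closure (MulAction.orbit G y), ∀ z ∈ closure (MulAction.orbit G y),
        op x z = op z x) ∧
      (∀ x ∈ closure (MulAction.orbit G y), ∀ z ∈ closure (MulAction.orbit G y),
        ∀ w ∈ closure (MulAction.orbit G y), op (op x z) w = op x (op z w)) ∧
      (∀ g h : G, op (g • y) (h • y) = (g * h) • y) ∧
      (∀ x ∈ closure (MulAction.orbit G y), op y x = x ∧ op x y = x) ∧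
      ∃ inv : X → X, ContinuousOn inv (closure (MulAction.orbit G y)) ∧
        ∀ x ∈ closure (MulAction.orbit G y),
          inv x ∈ closure (MulAction.orbit G y) ∧ op x (inv x) = y :=
  orbit_closure_compact_abelian_group_general y hy
end
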